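/- arXiv:0901.3671 — 4 statements merged into one kernel-verified Lean document; each statement's English description precedes it below -/
import Mathlib

section
/- For a positive long root α, the minimal coset representative x_α (the unique element of X_Ĩ with x_α(α̃) = α) has length l(x_α) = ht^∨(α̃) − ht^∨(α), and x_{−α} has length l(x_{−α}) = ht^∨(α̃) + ht^∨(α) − 1. -/
/-!
If a long root `β` is not the highest root `t`, some simple root `a` has `(a|β) < 0`, and `s_a β`
is a long root strictly higher than `β`. Descending from `t`, this builds the minimal coset
representative `x_β = s_a x_{s_a β}`: left multiplication by `s_a` keeps `X_Ĩ` stable, and since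
`x_{s_a β}⁻¹ a` is a positive root the length grows by exactly one (by the deletion condition).
Along the way `ht^∨ = f ∘ coroot` drops by one, because `⟨a, β^∨⟩ = -1` for long `β ≠ -a`, except
at the single step from `a` to `-a`, where it drops by two; that step accounts for the `-1` in
the length of `x_{-α}`. Minimal coset representatives are determined by their value at `t`.
-/

open scoped RealInnerProductSpace

variable {V : Type*} [NormedAddCommGroup V] [InnerProductSpace ℝ V]

/-- An irreducible reduced (crystallographic) root system in a real inner product space. -/
structure IsIrredRootSystem (Φ : Set V) : Prop where
  finite : Φ.Finite
  nonempty : Φ.Nonempty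
  nonzero : (0 : V) ∉ Φ
  spanning : Submodule.span ℝ Φ = ⊤
  reflect_mem : ∀ α ∈ Φ, ∀ β ∈ Φ, β - (2 * ⟪α, β⟫ / ⟪α, α⟫) • α ∈ Φ
  crystallographic : ∀ α ∈ Φ, ∀ β ∈ Φ, ∃ n : ℤ, 2 * ⟪α, β⟫ / ⟪α, α⟫ = (n : ℝ)
  reduced : ∀ α ∈ Φ, ∀ t : ℝ, t • α ∈ Φ → t = 1 ∨ t = -1
  irreducible : ∀ Φ₁ Φ₂ : Set V, Φ₁ ∪ Φ₂ = Φ →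
    (∀ α ∈ Φ₁, ∀ β ∈ Φ₂, ⟪α, β⟫ = 0) → Φ₁ = ∅ ∨ Φ₂ = ∅

/-- `Δ` is a base (system of simple roots) for `Φ`: it is contained in `Φ`, linearly
independent, and every root is an integral combination of `Δ` with coefficients all of
the same sign. -/
def IsBase (Φ : Set V) (Δ : Finset V) : Prop :=
  (Δ : Set V) ⊆ Φ ∧ LinearIndependent ℝ (fun a : Δ => (a : V)) ∧
    ∀ γ ∈ Φ, ∃ c : V → ℤ, γ = ∑ α ∈ Δ, (c α : ℝ) • α ∧
      ((∀ α ∈ Δ, 0 ≤ c α) ∨ (∀ α ∈ Δ, c α ≤ 0))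

/-- The positive roots with respect to the base `Δ`. -/
def posRoots (Φ : Set V) (Δ : Finset V) : Set V :=
  {γ ∈ Φ | ∃ c : V → ℕ, γ = ∑ α ∈ Δ, (c α : ℝ) • α}

/-- The coroot `γ^∨ = 2γ/(γ|γ)` of a root `γ`. -/
noncomputable def coroot (γ : V) : V := (2 / ⟪γ, γ⟫) • γ

/-- The set of reflections in the roots of `Φ`, as linear automorphisms of `V`. -/
def reflections (Φ : Set V) : Set (V ≃ₗ[ℝ] V) :=
  {w | ∃ α ∈ Φ, ∀ v, w v = v - (2 * ⟪α, v⟫ / ⟪α, α⟫) • α}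

/-- The Weyl group of `Φ`: the group generated by the reflections in the roots. -/
def weylGroup (Φ : Set V) : Subgroup (V ≃ₗ[ℝ] V) := Subgroup.closure (reflections Φ)

/-- The simple reflections with respect to the base `Δ`. -/
def simpleReflections (Δ : Finset V) : Set (V ≃ₗ[ℝ] V) :=
  {w | ∃ α ∈ Δ, ∀ v, w v = v - (2 * ⟪α, v⟫ / ⟪α, α⟫) • α}

/-- The length of `w` with respect to the simple reflections determined by `Δ`. -/
noncomputable def len (Δ : Finset V) (w : V ≃ₗ[ℝ] V) : ℕ :=
  sInf {n | ∃ L : List (V ≃ₗ[ℝ] V),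
    (∀ s ∈ L, s ∈ simpleReflections Δ) ∧ L.length = n ∧ L.prod = w}

/-- `t` is the highest root of `Φ` with respect to the base `Δ`. -/
def IsHighestRoot (Φ : Set V) (Δ : Finset V) (t : V) : Prop :=
  t ∈ Φ ∧ ∀ α ∈ Φ, ∃ c : V → ℕ, t - α = ∑ a ∈ Δ, (c a : ℝ) • a

/-- The set `X_Ĩ` of minimal coset representatives of `W/W_Ĩ`, where `Ĩ` is the set of
simple roots orthogonal to the highest root `t`. -/
def minCosetReps (Φ : Set V) (Δ : Finset V) (t : V) : Set (V ≃ₗ[ℝ] V) :=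
  {w | w ∈ weylGroup Φ ∧ ∀ γ ∈ Φ,
    (∃ c : V → ℕ, (∀ a ∈ Δ, ⟪t, a⟫ ≠ 0 → c a = 0) ∧ γ = ∑ a ∈ Δ, (c a : ℝ) • a) →
      w γ ∈ posRoots Φ Δ}

noncomputable def rootReflection (a : V) : V ≃ₗ[ℝ] V :=
  LinearEquiv.ofInvolutive
    { toFun := fun v => v - (2 * ⟪a, v⟫ / ⟪a, a⟫) • a
      map_add' := fun u v => by
        simp only [inner_add_right, mul_add, add_div, add_smul]; abel
      map_smul' := fun m v => by
        simp only [real_inner_smul_right, RingHom.id_apply, smul_sub, smul_smul]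
        congr 2; ring }
    fun v => by
      by_cases ha : a = 0
      · simp [ha]
      · have hk : 2 * ⟪a, v - (2 * ⟪a, v⟫ / ⟪a, a⟫) • a⟫ / ⟪a, a⟫ = -(2 * ⟪a, v⟫ / ⟪a, a⟫) := by
          rw [inner_sub_right, real_inner_smul_right]; field_simp; ring
        simp only [LinearMap.coe_mk, AddHom.coe_mk, hk, neg_smul, sub_neg_eq_add, sub_add_cancel]

section Reflection

variable (a : V)

lemma rootReflection_apply (v : V) :
    rootReflection a v = v - (2 * ⟪a, v⟫ / ⟪a, a⟫) • a := rfl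

@[simp]
lemma rootReflection_rootReflection (v : V) : rootReflection a (rootReflection a v) = v :=
  (rootReflection a).symm_apply_apply v

lemma rootReflection_mul_self : rootReflection a * rootReflection a = 1 :=
  LinearEquiv.ext (rootReflection_rootReflection a)

@[simp]
lemma rootReflection_inv : (rootReflection a)⁻¹ = rootReflection a :=
  inv_eq_of_mul_eq_one_right (rootReflection_mul_self a)

@[simp]
lemma rootReflection_apply_self : rootReflection a a = -a := by
  by_cases ha : a = 0
  · simp [ha]
  · rw [rootReflection_apply, mul_div_assoc, div_self (inner_self_ne_zero.mpr ha), mul_one,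
      two_smul, sub_add_cancel_left]

lemma rootReflection_neg : rootReflection (-a) = rootReflection a := by
  ext v; simp [rootReflection_apply, neg_div]

lemma inner_rootReflection (u v : V) : ⟪rootReflection a u, rootReflection a v⟫ = ⟪u, v⟫ := by
  by_cases ha : a = 0
  · simp [ha, rootReflection_apply]
  · simp only [rootReflection_apply, inner_sub_left, inner_sub_right, real_inner_smul_left,
      real_inner_smul_right, real_inner_comm a u]
    field_simp; ring

lemma rootReflection_apply_conj {w : V ≃ₗ[ℝ] V} (hw : ∀ u v, ⟪w u, w v⟫ = ⟪u, v⟫) :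
    rootReflection (w a) = w * rootReflection a * w⁻¹ := by
  ext v
  obtain ⟨u, rfl⟩ := w.surjective v
  simp only [rootReflection_apply, LinearEquiv.mul_apply, LinearEquiv.coe_inv,
    LinearEquiv.symm_apply_apply, map_sub, map_smul, hw]

end Reflection

def rootPreservingIsometries (Φ : Set V) : Subgroup (V ≃ₗ[ℝ] V) where
  carrier := {w | (∀ γ, w γ ∈ Φ ↔ γ ∈ Φ) ∧ ∀ u v, ⟪w u, w v⟫ = ⟪u, v⟫}
  one_mem' := ⟨fun _ => Iff.rfl, fun _ _ => rfl⟩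
  mul_mem' := fun ⟨hx, hx'⟩ ⟨hy, hy'⟩ =>
    ⟨fun γ => (hx _).trans (hy γ), fun u v => (hx' _ _).trans (hy' u v)⟩
  inv_mem' := fun {x} ⟨hx, hx'⟩ =>
    ⟨fun γ => by simpa using (hx (x⁻¹ γ)).symm,
      fun u v => by simpa using (hx' (x⁻¹ u) (x⁻¹ v)).symm⟩

variable {Φ : Set V} {Δ : Finset V} {t : V}

lemma mem_reflections_iff {w : V ≃ₗ[ℝ] V} :
    w ∈ reflections Φ ↔ ∃ a ∈ Φ, rootReflection a = w :=
  exists_congr fun a => and_congr_right fun _ => by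
    rw [eq_comm, LinearEquiv.ext_iff]; rfl

lemma mem_simpleReflections_iff {w : V ≃ₗ[ℝ] V} :
    w ∈ simpleReflections Δ ↔ ∃ a ∈ Δ, rootReflection a = w :=
  exists_congr fun a => and_congr_right fun _ => by
    rw [eq_comm, LinearEquiv.ext_iff]; rfl

lemma rootReflection_mem_simpleReflections {a : V} (ha : a ∈ Δ) :
    rootReflection a ∈ simpleReflections Δ :=
  mem_simpleReflections_iff.mpr ⟨a, ha, rfl⟩

lemma inv_mem_simpleReflections {s : V ≃ₗ[ℝ] V} (hs : s ∈ simpleReflections Δ) :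
    s⁻¹ ∈ simpleReflections Δ := by
  obtain ⟨a, ha, rfl⟩ := mem_simpleReflections_iff.mp hs
  rw [rootReflection_inv]
  exact rootReflection_mem_simpleReflections ha

lemma rootReflection_mem_weylGroup {a : V} (ha : a ∈ Φ) : rootReflection a ∈ weylGroup Φ :=
  Subgroup.subset_closure (mem_reflections_iff.mpr ⟨a, ha, rfl⟩)

lemma closure_simpleReflections_le_weylGroup (hΔΦ : (Δ : Set V) ⊆ Φ) :
    Subgroup.closure (simpleReflections Δ) ≤ weylGroup Φ := by
  refine (Subgroup.closure_le _).mpr ?_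
  rintro _ ⟨a, ha, hw⟩
  exact Subgroup.subset_closure ⟨a, hΔΦ ha, hw⟩

namespace IsIrredRootSystem

lemma rootReflection_apply_mem (hΦ : IsIrredRootSystem Φ) {a γ : V} (ha : a ∈ Φ) (hγ : γ ∈ Φ) :
    rootReflection a γ ∈ Φ :=
  hΦ.reflect_mem a ha γ hγ

lemma weylGroup_le (hΦ : IsIrredRootSystem Φ) : weylGroup Φ ≤ rootPreservingIsometries Φ := by
  refine (Subgroup.closure_le _).mpr ?_
  rintro _ hw
  obtain ⟨a, ha, rfl⟩ := mem_reflections_iff.mp hw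
  refine ⟨fun γ => ⟨fun hγ => ?_, hΦ.rootReflection_apply_mem ha⟩, inner_rootReflection a⟩
  rw [← rootReflection_rootReflection a γ]
  exact hΦ.rootReflection_apply_mem ha hγ

lemma apply_mem_iff (hΦ : IsIrredRootSystem Φ) {w : V ≃ₗ[ℝ] V} (hw : w ∈ weylGroup Φ) (γ : V) :
    w γ ∈ Φ ↔ γ ∈ Φ :=
  (hΦ.weylGroup_le hw).1 γ

lemma inner_apply_apply (hΦ : IsIrredRootSystem Φ) {w : V ≃ₗ[ℝ] V} (hw : w ∈ weylGroup Φ)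
    (u v : V) : ⟪w u, w v⟫ = ⟪u, v⟫ :=
  (hΦ.weylGroup_le hw).2 u v

lemma ne_zero (hΦ : IsIrredRootSystem Φ) {γ : V} (hγ : γ ∈ Φ) : γ ≠ 0 :=
  fun h => hΦ.nonzero (h ▸ hγ)

lemma inner_self_pos (hΦ : IsIrredRootSystem Φ) {γ : V} (hγ : γ ∈ Φ) : 0 < ⟪γ, γ⟫ :=
  real_inner_self_pos.mpr (hΦ.ne_zero hγ)

lemma neg_mem (hΦ : IsIrredRootSystem Φ) {γ : V} (hγ : γ ∈ Φ) : -γ ∈ Φ := by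
  rw [← rootReflection_apply_self]
  exact hΦ.rootReflection_apply_mem hγ hγ

end IsIrredRootSystem

open Classical in
lemma sum_ite_smul_eq_smul {a : V} (ha : a ∈ Δ) (k : ℝ) :
    ∑ b ∈ Δ, (if b = a then k else 0) • b = k • a := by
  simp [ite_smul, ha]

lemma inner_sum_natCast_smul_nonneg {v : V} (h : ∀ a ∈ Δ, 0 ≤ ⟪a, v⟫) (c : V → ℕ) :
    0 ≤ ⟪∑ a ∈ Δ, (c a : ℝ) • a, v⟫ := by
  rw [sum_inner]
  exact Finset.sum_nonneg fun a ha => by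
    rw [real_inner_smul_left]; exact mul_nonneg (Nat.cast_nonneg _) (h a ha)

lemma IsIrredRootSystem.exists_inner_pos (hΦ : IsIrredRootSystem Φ) {γ : V}
    (hγ : γ ∈ posRoots Φ Δ) : ∃ a ∈ Δ, 0 < ⟪a, γ⟫ := by
  by_contra! h
  obtain ⟨hγΦ, c, hc⟩ := hγ
  have := inner_sum_natCast_smul_nonneg (v := -γ)
    (fun a ha => by rw [inner_neg_right]; linarith [h a ha]) c
  rw [← hc, inner_neg_right] at this
  linarith [hΦ.inner_self_pos hγΦ]

namespace IsBase

lemma coeff_eq (hΔ : IsBase Φ Δ) {g h : V → ℝ} (heq : ∑ a ∈ Δ, g a • a = ∑ a ∈ Δ, h a • a)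
    {a : V} (ha : a ∈ Δ) : g a = h a := by
  have h0 : ∑ i : Δ, (g i - h i) • (i : V) = 0 := by
    rw [Finset.sum_coe_sort Δ fun a => (g a - h a) • a]
    simp only [sub_smul, Finset.sum_sub_distrib, heq, sub_self]
  exact sub_eq_zero.mp (Fintype.linearIndependent_iff.mp hΔ.2.1 _ h0 ⟨a, ha⟩)

open Classical in
lemma simple_mem_posRoots (hΔ : IsBase Φ Δ) {a : V} (ha : a ∈ Δ) : a ∈ posRoots Φ Δ :=
  ⟨hΔ.1 ha, fun b => if b = a then 1 else 0, by simp [ite_smul, ha]⟩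

lemma mem_posRoots_of_int_coeff {γ : V} (hγ : γ ∈ Φ) {d : V → ℤ}
    (hsum : γ = ∑ b ∈ Δ, (d b : ℝ) • b) (hd : ∀ b ∈ Δ, 0 ≤ d b) : γ ∈ posRoots Φ Δ :=
  ⟨hγ, fun b => (d b).toNat, hsum.trans <| Finset.sum_congr rfl fun b hb => by
    rw [← Int.cast_natCast, Int.toNat_of_nonneg (hd b hb)]⟩

lemma mem_posRoots_or_neg_mem (hΦ : IsIrredRootSystem Φ) (hΔ : IsBase Φ Δ) {γ : V}
    (hγ : γ ∈ Φ) : γ ∈ posRoots Φ Δ ∨ -γ ∈ posRoots Φ Δ := by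
  obtain ⟨d, hsum, hd | hd⟩ := hΔ.2.2 γ hγ
  · exact .inl (mem_posRoots_of_int_coeff hγ hsum hd)
  · refine .inr (mem_posRoots_of_int_coeff (hΦ.neg_mem hγ) (d := -d) ?_
      fun b hb => neg_nonneg.mpr (hd b hb))
    simp [hsum, ← Finset.sum_neg_distrib]

lemma neg_notMem_posRoots (hΦ : IsIrredRootSystem Φ) (hΔ : IsBase Φ Δ) {γ : V}
    (hγ : γ ∈ posRoots Φ Δ) : -γ ∉ posRoots Φ Δ := by
  rintro ⟨-, d, hd⟩
  obtain ⟨hγΦ, c, hc⟩ := hγ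
  have hcd : ∑ b ∈ Δ, ((c b : ℝ) + d b) • b = ∑ b ∈ Δ, (0 : ℝ) • b := by
    simp only [add_smul, Finset.sum_add_distrib, ← hc, ← hd, zero_smul, Finset.sum_const_zero,
      add_neg_cancel]
  refine hΦ.ne_zero hγΦ (hc.trans (Finset.sum_eq_zero fun b hb => ?_))
  have := hΔ.coeff_eq hcd hb
  rw [show (c b : ℝ) = 0 by linarith [(c b).cast_nonneg (α := ℝ), (d b).cast_nonneg (α := ℝ)],
    zero_smul]

lemma mem_posRoots_of_coeff_pos (hΔ : IsBase Φ Δ) {γ : V} (hγ : γ ∈ Φ) {g : V → ℝ}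
    (hsum : γ = ∑ b ∈ Δ, g b • b) {b : V} (hb : b ∈ Δ) (hpos : 0 < g b) : γ ∈ posRoots Φ Δ := by
  obtain ⟨d, hd, hsign⟩ := hΔ.2.2 γ hγ
  have hgd : g b = d b := hΔ.coeff_eq (hsum.symm.trans hd) hb
  refine mem_posRoots_of_int_coeff hγ hd (hsign.resolve_right fun hneg => ?_)
  have : (d b : ℝ) ≤ 0 := Int.cast_nonpos.mpr (hneg b hb)
  linarith

/-- By reducedness, a root supported on the simple root `a` alone is `± a`. -/
lemma exists_coeff_ne_zero (hΦ : IsIrredRootSystem Φ) (hΔ : IsBase Φ Δ) {a γ : V} (ha : a ∈ Δ)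
    (hγ : γ ∈ Φ) {c : V → ℕ} (hc : γ = ∑ b ∈ Δ, (c b : ℝ) • b) (hne : γ ≠ a) :
    ∃ b ∈ Δ, b ≠ a ∧ c b ≠ 0 := by
  by_contra! h
  have hγa : γ = (c a : ℝ) • a := by
    rw [hc, Finset.sum_eq_single_of_mem a ha fun b hb hba => by simp [h b hb hba]]
  rcases hΦ.reduced a (hΔ.1 ha) _ (hγa ▸ hγ) with h1 | h1
  · exact hne (by rw [hγa, h1, one_smul])
  · linarith [(c a).cast_nonneg (α := ℝ)]

open Classical in
lemma rootReflection_apply_mem_posRoots (hΦ : IsIrredRootSystem Φ) (hΔ : IsBase Φ Δ)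
    {a γ : V} (ha : a ∈ Δ) (hγ : γ ∈ posRoots Φ Δ) (hne : γ ≠ a) :
    rootReflection a γ ∈ posRoots Φ Δ := by
  obtain ⟨hγΦ, c, hc⟩ := hγ
  obtain ⟨b, hb, hba, hcb⟩ := hΔ.exists_coeff_ne_zero hΦ ha hγΦ hc hne
  set k := 2 * ⟪a, γ⟫ / ⟪a, a⟫
  have hsum : rootReflection a γ = ∑ b ∈ Δ, ((c b : ℝ) - if b = a then k else 0) • b := by
    simp only [sub_smul, Finset.sum_sub_distrib, sum_ite_smul_eq_smul ha, ← hc]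
    rfl
  refine hΔ.mem_posRoots_of_coeff_pos (hΦ.rootReflection_apply_mem (hΔ.1 ha) hγΦ) hsum hb ?_
  rw [if_neg hba, sub_zero]
  exact Nat.cast_pos.mpr (Nat.pos_of_ne_zero hcb)

lemma list_prod_mem_weylGroup (hΔ : IsBase Φ Δ) {L : List (V ≃ₗ[ℝ] V)}
    (hL : ∀ s ∈ L, s ∈ simpleReflections Δ) : L.prod ∈ weylGroup Φ :=
  list_prod_mem fun s hs =>
    closure_simpleReflections_le_weylGroup hΔ.1 (Subgroup.subset_closure (hL s hs))

lemma rootReflection_mem_closure (hΦ : IsIrredRootSystem Φ) (hΔ : IsBase Φ Δ)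
    {f : V →ₗ[ℝ] ℝ} (hf : ∀ a ∈ Δ, 0 < f a) {β : V} (hβ : β ∈ Φ) :
    rootReflection β ∈ Subgroup.closure (simpleReflections Δ) := by
  suffices h : ∀ β ∈ posRoots Φ Δ, rootReflection β ∈ Subgroup.closure (simpleReflections Δ) by
    rcases hΔ.mem_posRoots_or_neg_mem hΦ hβ with hp | hn
    · exact h β hp
    · simpa [rootReflection_neg] using h _ hn
  have hwf : (posRoots Φ Δ).WellFoundedOn fun x y => f x < f y :=
    Set.wellFoundedOn_image.mp ((hΦ.finite.subset fun _ h => h.1).image f).wellFoundedOn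
  intro β hβ
  refine hwf.induction (P := fun β => rootReflection β ∈ Subgroup.closure (simpleReflections Δ))
    hβ fun β hβ IH => ?_
  obtain ⟨a, ha, hpos⟩ := hΦ.exists_inner_pos hβ
  have hsa := Subgroup.subset_closure (rootReflection_mem_simpleReflections ha)
  by_cases hβa : β = a
  · rwa [hβa]
  have hβ' := hΔ.rootReflection_apply_mem_posRoots hΦ ha hβ hβa
  have hlt : f (rootReflection a β) < f β := by
    rw [rootReflection_apply, map_sub, map_smul, smul_eq_mul, sub_lt_self_iff]
    exact mul_pos (div_pos (mul_pos two_pos hpos) (hΦ.inner_self_pos (hΔ.1 ha))) (hf a ha)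
  have hconj : rootReflection β =
      rootReflection a * rootReflection (rootReflection a β) * rootReflection a := by
    rw [rootReflection_apply_conj β (inner_rootReflection a), rootReflection_inv, ← mul_assoc,
      ← mul_assoc, rootReflection_mul_self, one_mul, mul_assoc, rootReflection_mul_self, mul_one]
  rw [hconj]
  exact mul_mem (mul_mem hsa (IH _ hβ' hlt)) hsa

lemma weylGroup_le_closure (hΦ : IsIrredRootSystem Φ) (hΔ : IsBase Φ Δ) {f : V →ₗ[ℝ] ℝ}
    (hf : ∀ a ∈ Δ, 0 < f a) : weylGroup Φ ≤ Subgroup.closure (simpleReflections Δ) := by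
  refine (Subgroup.closure_le _).mpr fun w hw => ?_
  obtain ⟨β, hβ, rfl⟩ := mem_reflections_iff.mp hw
  exact hΔ.rootReflection_mem_closure hΦ hf hβ

end IsBase

section Length

variable {w : V ≃ₗ[ℝ] V}

lemma len_le_length {L : List (V ≃ₗ[ℝ] V)} (hL : ∀ s ∈ L, s ∈ simpleReflections Δ) :
    len Δ L.prod ≤ L.length :=
  Nat.sInf_le ⟨L, hL, rfl, rfl⟩

lemma len_one : len Δ (1 : V ≃ₗ[ℝ] V) = 0 :=
  Nat.le_zero.mp (len_le_length (L := []) (by simp))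

lemma exists_reduced_word (hw : w ∈ Subgroup.closure (simpleReflections Δ)) :
    ∃ L : List (V ≃ₗ[ℝ] V), (∀ s ∈ L, s ∈ simpleReflections Δ) ∧ L.length = len Δ w ∧
      L.prod = w := by
  have hinv : (simpleReflections Δ)⁻¹ = simpleReflections Δ :=
    Set.ext fun s => ⟨fun hs => by simpa using inv_mem_simpleReflections hs,
      inv_mem_simpleReflections⟩
  rw [← Subgroup.mem_toSubmonoid, Subgroup.closure_toSubmonoid, hinv, Set.union_self] at hw
  obtain ⟨L, hL, rfl⟩ := Submonoid.exists_list_of_mem_closure hw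
  exact Nat.sInf_mem (s := {n | ∃ L' : List (V ≃ₗ[ℝ] V),
    (∀ s ∈ L', s ∈ simpleReflections Δ) ∧ L'.length = n ∧ L'.prod = L.prod}) ⟨_, L, hL, rfl, rfl⟩

lemma len_inv (hw : w ∈ Subgroup.closure (simpleReflections Δ)) : len Δ w⁻¹ = len Δ w := by
  suffices h : ∀ w ∈ Subgroup.closure (simpleReflections Δ), len Δ w⁻¹ ≤ len Δ w from
    le_antisymm (h w hw) (by simpa using h _ (inv_mem hw))
  intro w hw
  obtain ⟨L, hL, hlen, rfl⟩ := exists_reduced_word hw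
  rw [List.prod_inv_reverse, ← hlen]
  have hL' : ∀ s ∈ (L.map fun s => s⁻¹).reverse, s ∈ simpleReflections Δ := by
    simp only [List.mem_reverse, List.mem_map]
    rintro _ ⟨s, hs, rfl⟩
    exact inv_mem_simpleReflections (hL s hs)
  simpa using len_le_length hL'

lemma len_rootReflection_mul_le {a : V} (ha : a ∈ Δ)
    (hw : w ∈ Subgroup.closure (simpleReflections Δ)) :
    len Δ (rootReflection a * w) ≤ len Δ w + 1 := by
  obtain ⟨L, hL, hlen, rfl⟩ := exists_reduced_word hw
  rw [← hlen, ← List.prod_cons]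
  exact len_le_length (List.forall_mem_cons.mpr ⟨rootReflection_mem_simpleReflections ha, hL⟩)

end Length

namespace IsBase

variable {w : V ≃ₗ[ℝ] V}

lemma exists_word_prod_mul_rootReflection (hΦ : IsIrredRootSystem Φ) (hΔ : IsBase Φ Δ)
    {L : List (V ≃ₗ[ℝ] V)} (hL : ∀ s ∈ L, s ∈ simpleReflections Δ) {a : V} (ha : a ∈ Δ)
    (hneg : -(L.prod a) ∈ posRoots Φ Δ) :
    ∃ L' : List (V ≃ₗ[ℝ] V), (∀ s ∈ L', s ∈ simpleReflections Δ) ∧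
      L'.length + 1 = L.length ∧ L'.prod = L.prod * rootReflection a := by
  induction L with
  | nil => exact absurd hneg (hΔ.neg_notMem_posRoots hΦ (hΔ.simple_mem_posRoots ha))
  | cons s L ih =>
    obtain ⟨hs, hLs⟩ := List.forall_mem_cons.mp hL
    obtain ⟨b, hb, rfl⟩ := mem_simpleReflections_iff.mp hs
    have hu := hΔ.list_prod_mem_weylGroup hLs
    rw [List.prod_cons, LinearEquiv.mul_apply] at hneg
    rcases hΔ.mem_posRoots_or_neg_mem hΦ ((hΦ.apply_mem_iff hu a).mpr (hΔ.1 ha)) with hp | hn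
    · by_cases hab : L.prod a = b
      · -- `s_b = u s_a u⁻¹` for `u = L.prod`, so the letter `s_b` is the one to delete
        refine ⟨L, hLs, rfl, ?_⟩
        rw [List.prod_cons, ← hab, rootReflection_apply_conj a (hΦ.inner_apply_apply hu),
          inv_mul_cancel_right, mul_assoc, rootReflection_mul_self, mul_one]
      · exact absurd hneg
          (hΔ.neg_notMem_posRoots hΦ (hΔ.rootReflection_apply_mem_posRoots hΦ hb hp hab))
    · obtain ⟨L', hL', hlen, hprod⟩ := ih hLs hn
      refine ⟨rootReflection b :: L', List.forall_mem_cons.mpr ⟨hs, hL'⟩, by simp [← hlen], ?_⟩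
      rw [List.prod_cons, hprod, List.prod_cons, mul_assoc]

lemma len_mul_rootReflection_lt (hΦ : IsIrredRootSystem Φ) (hΔ : IsBase Φ Δ)
    (hw : w ∈ Subgroup.closure (simpleReflections Δ)) {a : V} (ha : a ∈ Δ)
    (hneg : -(w a) ∈ posRoots Φ Δ) : len Δ (w * rootReflection a) < len Δ w := by
  obtain ⟨L, hL, hlen, rfl⟩ := exists_reduced_word hw
  obtain ⟨L', hL', hlen', hprod⟩ := hΔ.exists_word_prod_mul_rootReflection hΦ hL ha hneg
  have := len_le_length hL'
  rw [hprod] at this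
  omega

lemma len_rootReflection_mul (hΦ : IsIrredRootSystem Φ) (hΔ : IsBase Φ Δ)
    (hw : w ∈ Subgroup.closure (simpleReflections Δ)) {a : V} (ha : a ∈ Δ)
    (hpos : w⁻¹ a ∈ posRoots Φ Δ) : len Δ (rootReflection a * w) = len Δ w + 1 := by
  have hsa := Subgroup.subset_closure (rootReflection_mem_simpleReflections ha)
  have hv : (rootReflection a * w)⁻¹ ∈ Subgroup.closure (simpleReflections Δ) :=
    inv_mem (mul_mem hsa hw)
  have hneg : -((rootReflection a * w)⁻¹ a) ∈ posRoots Φ Δ := by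
    simpa [mul_inv_rev, LinearEquiv.mul_apply] using hpos
  have hv' : (rootReflection a * w)⁻¹ * rootReflection a = w⁻¹ := by
    rw [mul_inv_rev, rootReflection_inv, mul_assoc, rootReflection_mul_self, mul_one]
  have hlt := hΔ.len_mul_rootReflection_lt hΦ hv ha hneg
  rw [hv', len_inv hw, len_inv (mul_mem hsa hw)] at hlt
  exact le_antisymm (len_rootReflection_mul_le ha hw) hlt

lemma exists_neg_of_ne_one (hΦ : IsIrredRootSystem Φ) (hΔ : IsBase Φ Δ)
    (hw : w ∈ Subgroup.closure (simpleReflections Δ)) (hne : w ≠ 1) :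
    ∃ a ∈ Δ, -(w a) ∈ posRoots Φ Δ := by
  obtain ⟨L, hL, hlen, rfl⟩ := exists_reduced_word hw
  obtain rfl | ⟨L, s, rfl⟩ := L.eq_nil_or_concat
  · exact absurd List.prod_nil hne
  simp only [List.concat_eq_append, List.forall_mem_append, List.forall_mem_singleton] at hL hlen ⊢
  obtain ⟨b, hb, rfl⟩ := mem_simpleReflections_iff.mp hL.2
  have hu := hΔ.list_prod_mem_weylGroup hL.1
  have hwb : (L ++ [rootReflection b]).prod b = -(L.prod b) := by simp [LinearEquiv.mul_apply]
  refine ⟨b, hb, ?_⟩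
  rcases hΔ.mem_posRoots_or_neg_mem hΦ ((hΦ.apply_mem_iff hu b).mpr (hΔ.1 hb)) with hp | hn
  · rwa [hwb, neg_neg]
  · have hlt := hΔ.len_mul_rootReflection_lt hΦ
      (list_prod_mem fun s hs => Subgroup.subset_closure (hL.1 s hs)) hb hn
    have := len_le_length hL.1
    rw [← List.prod_singleton (x := rootReflection b), ← List.prod_append, ← hlen,
      List.length_append, List.length_singleton] at hlt
    omega

end IsBase

def IsLongRoot (Φ : Set V) (β : V) : Prop :=
  β ∈ Φ ∧ ∀ γ ∈ Φ, ⟪γ, γ⟫ ≤ ⟪β, β⟫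

lemma IsLongRoot.neg (hΦ : IsIrredRootSystem Φ) {β : V} (hβ : IsLongRoot Φ β) :
    IsLongRoot Φ (-β) :=
  ⟨hΦ.neg_mem hβ.1, by simpa using hβ.2⟩

lemma IsLongRoot.rootReflection_apply (hΦ : IsIrredRootSystem Φ) {a β : V} (ha : a ∈ Φ)
    (hβ : IsLongRoot Φ β) : IsLongRoot Φ (rootReflection a β) :=
  ⟨hΦ.rootReflection_apply_mem ha hβ.1, fun γ hγ => by rw [inner_rootReflection]; exact hβ.2 γ hγ⟩

lemma IsIrredRootSystem.inner_mul_inner_lt (hΦ : IsIrredRootSystem Φ) {a β : V} (ha : a ∈ Φ)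
    (hβ : β ∈ Φ) (h1 : β ≠ a) (h2 : β ≠ -a) : ⟪a, β⟫ * ⟪a, β⟫ < ⟪a, a⟫ * ⟪β, β⟫ := by
  refine (real_inner_mul_inner_self_le a β).lt_of_ne fun h => ?_
  have hnorm : ‖⟪a, β⟫‖ = ‖a‖ * ‖β‖ := by
    rw [Real.norm_eq_abs, ← pow_left_inj₀ (abs_nonneg _) (by positivity) two_ne_zero, sq_abs,
      mul_pow, ← real_inner_self_eq_norm_sq, ← real_inner_self_eq_norm_sq, sq, h]
  obtain ⟨k, -, rfl⟩ := (norm_inner_eq_norm_iff (hΦ.ne_zero ha) (hΦ.ne_zero hβ)).mp hnorm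
  rcases hΦ.reduced a ha k hβ with rfl | rfl <;> simp_all

/-- Cauchy–Schwarz and the length bound give `|⟨a, β^∨⟩| < 2`; integrality does the rest. -/
lemma IsLongRoot.two_inner_div_eq_neg_one (hΦ : IsIrredRootSystem Φ) {a β : V}
    (hβ : IsLongRoot Φ β) (ha : a ∈ Φ) (h1 : β ≠ a) (h2 : β ≠ -a) (hneg : ⟪a, β⟫ < 0) :
    2 * ⟪a, β⟫ / ⟪β, β⟫ = -1 := by
  obtain ⟨n, hn⟩ := hΦ.crystallographic β hβ.1 a ha
  rw [real_inner_comm] at hn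
  have hββ := hΦ.inner_self_pos hβ.1
  have hCS := hΦ.inner_mul_inner_lt ha hβ.1 h1 h2
  have haa := hβ.2 a ha
  have hn' : (n : ℝ) * ⟪β, β⟫ = 2 * ⟪a, β⟫ := by rw [← hn]; field_simp
  have hsq : (n : ℝ) ^ 2 < 4 := by
    refine lt_of_mul_lt_mul_right (a := ⟪β, β⟫ ^ 2) ?_ (sq_nonneg _)
    rw [← mul_pow, hn']
    nlinarith
  have hnneg : (n : ℝ) < 0 := by nlinarith
  have : n = -1 := by
    have : n ^ 2 < 4 ∧ n < 0 := by exact_mod_cast And.intro hsq hnneg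
    nlinarith
  rw [hn, this]
  norm_num

section Coroot

variable {f : V →ₗ[ℝ] ℝ} {a : V}

lemma coroot_neg (a : V) : coroot (-a) = -coroot a := by
  simp [coroot]

lemma apply_rootReflection_apply (hf : f (coroot a) = 1) (β : V) :
    f (rootReflection a β) = f β - ⟪a, β⟫ := by
  rw [coroot, map_smul, smul_eq_mul] at hf
  rw [rootReflection_apply, map_sub, map_smul, smul_eq_mul,
    show 2 * ⟪a, β⟫ / ⟪a, a⟫ * f a = ⟪a, β⟫ * (2 / ⟪a, a⟫ * f a) by ring, hf, mul_one]

lemma apply_eq_of_coroot_eq_one (hf : f (coroot a) = 1) : f a = ⟪a, a⟫ / 2 := by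
  have := apply_rootReflection_apply hf a
  rw [rootReflection_apply_self, map_neg] at this
  linarith

lemma coroot_rootReflection_apply (hf : f (coroot a) = 1) (β : V) :
    f (coroot (rootReflection a β)) = f (coroot β) - 2 * ⟪a, β⟫ / ⟪β, β⟫ := by
  rw [coroot, coroot, inner_rootReflection, map_smul, map_smul, apply_rootReflection_apply hf,
    smul_eq_mul, smul_eq_mul]
  ring

end Coroot

lemma IsBase.rootReflection_apply_mem_posRoots_iff (hΦ : IsIrredRootSystem Φ)
    (hΔ : IsBase Φ Δ) {a β : V} (ha : a ∈ Δ) (h1 : β ≠ a) (h2 : β ≠ -a) :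
    rootReflection a β ∈ posRoots Φ Δ ↔ β ∈ posRoots Φ Δ := by
  refine ⟨fun h => ?_, fun h => hΔ.rootReflection_apply_mem_posRoots hΦ ha h h1⟩
  rw [← rootReflection_rootReflection a β]
  refine hΔ.rootReflection_apply_mem_posRoots hΦ ha h fun h' => h2 ?_
  rw [← rootReflection_rootReflection a β, h', rootReflection_apply_self]

open Classical in
/-- Either `β = -a`, where `ht^∨` jumps from `-1` to `1` as `β` crosses to the positive roots,
or `⟨a, β^∨⟩ = -1`. -/
lemma IsLongRoot.coroot_rootReflection_add_ite (hΦ : IsIrredRootSystem Φ) (hΔ : IsBase Φ Δ)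
    {f : V →ₗ[ℝ] ℝ} (hf : ∀ a ∈ Δ, f (coroot a) = 1) {a β : V} (hβ : IsLongRoot Φ β)
    (ha : a ∈ Δ) (hneg : ⟪a, β⟫ < 0) :
    f (coroot (rootReflection a β)) + (if rootReflection a β ∈ posRoots Φ Δ then 0 else 1) =
      f (coroot β) + (if β ∈ posRoots Φ Δ then 0 else 1) + 1 := by
  have hpos := hΔ.simple_mem_posRoots ha
  by_cases h2 : β = -a
  · subst h2
    rw [map_neg, rootReflection_apply_self, neg_neg, if_pos hpos,
      if_neg (hΔ.neg_notMem_posRoots hΦ hpos), coroot_neg, map_neg, hf a ha]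
    norm_num
  have h1 : β ≠ a := by
    rintro rfl
    linarith [hΦ.inner_self_pos hβ.1]
  rw [hΔ.rootReflection_apply_mem_posRoots_iff hΦ ha h1 h2, coroot_rootReflection_apply (hf a ha),
    hβ.two_inner_div_eq_neg_one hΦ (hΔ.1 ha) h1 h2 hneg]
  ring

namespace IsHighestRoot

lemma inner_simple_nonneg (hΦ : IsIrredRootSystem Φ) (hΔ : IsBase Φ Δ)
    (ht : IsHighestRoot Φ Δ t) {a : V} (ha : a ∈ Δ) : 0 ≤ ⟪a, t⟫ := by
  obtain ⟨c, hc⟩ := ht.2 _ (hΦ.rootReflection_apply_mem (hΔ.1 ha) ht.1)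
  rw [rootReflection_apply, sub_sub_cancel, ← sum_ite_smul_eq_smul ha] at hc
  have hk : 2 * ⟪a, t⟫ / ⟪a, a⟫ = c a := by simpa using hΔ.coeff_eq hc ha
  have := (c a).cast_nonneg (α := ℝ)
  rw [← hk, le_div_iff₀ (hΦ.inner_self_pos (hΔ.1 ha))] at this
  linarith

lemma inner_nonneg (hΦ : IsIrredRootSystem Φ) (hΔ : IsBase Φ Δ) (ht : IsHighestRoot Φ Δ t)
    {γ : V} (hγ : γ ∈ posRoots Φ Δ) : 0 ≤ ⟪t, γ⟫ := by
  obtain ⟨-, c, rfl⟩ := hγ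
  rw [real_inner_comm]
  exact inner_sum_natCast_smul_nonneg (fun _ ha => ht.inner_simple_nonneg hΦ hΔ ha) c

lemma mem_posRoots (hΦ : IsIrredRootSystem Φ) (hΔ : IsBase Φ Δ) (ht : IsHighestRoot Φ Δ t) :
    t ∈ posRoots Φ Δ := by
  refine (hΔ.mem_posRoots_or_neg_mem hΦ ht.1).resolve_right fun h => ?_
  have := ht.inner_nonneg hΦ hΔ h
  rw [inner_neg_right] at this
  linarith [hΦ.inner_self_pos ht.1]

lemma exists_inner_neg (hΦ : IsIrredRootSystem Φ) (hΔ : IsBase Φ Δ) (ht : IsHighestRoot Φ Δ t)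
    {β : V} (hβ : IsLongRoot Φ β) (hne : β ≠ t) : ∃ a ∈ Δ, ⟪a, β⟫ < 0 := by
  by_contra! h
  obtain ⟨c, hc⟩ := ht.2 β hβ.1
  have h1 : 0 ≤ ⟪t - β, β⟫ := hc ▸ inner_sum_natCast_smul_nonneg h c
  have h2 : 0 ≤ ⟪t - β, t⟫ :=
    hc ▸ inner_sum_natCast_smul_nonneg (fun _ ha => ht.inner_simple_nonneg hΦ hΔ ha) c
  have h3 := hβ.2 t ht.1
  have h4 : ⟪t - β, t - β⟫ = 0 := by
    simp only [inner_sub_left, inner_sub_right, real_inner_comm t β] at h1 h2 ⊢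
    linarith
  exact hne (sub_eq_zero.mp (inner_self_eq_zero.mp h4)).symm

lemma exists_coeff_iff (hΦ : IsIrredRootSystem Φ) (hΔ : IsBase Φ Δ) (ht : IsHighestRoot Φ Δ t)
    {γ : V} (hγ : γ ∈ Φ) :
    (∃ c : V → ℕ, (∀ a ∈ Δ, ⟪t, a⟫ ≠ 0 → c a = 0) ∧ γ = ∑ a ∈ Δ, (c a : ℝ) • a) ↔
      γ ∈ posRoots Φ Δ ∧ ⟪t, γ⟫ = 0 := by
  have hsum (c : V → ℕ) : ⟪t, ∑ a ∈ Δ, (c a : ℝ) • a⟫ = ∑ a ∈ Δ, (c a : ℝ) * ⟪a, t⟫ := by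
    simp [inner_sum, real_inner_smul_right, real_inner_comm]
  constructor
  · rintro ⟨c, hc, rfl⟩
    refine ⟨⟨hγ, c, rfl⟩, (hsum c).trans (Finset.sum_eq_zero fun a ha => ?_)⟩
    by_cases h : ⟪t, a⟫ = 0 <;> simp [real_inner_comm, h, hc a ha]
  · rintro ⟨⟨-, c, rfl⟩, h0⟩
    refine ⟨c, fun a ha hta => ?_, rfl⟩
    rw [hsum, Finset.sum_eq_zero_iff_of_nonneg fun a ha =>
      mul_nonneg (Nat.cast_nonneg _) (ht.inner_simple_nonneg hΦ hΔ ha)] at h0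
    simpa [real_inner_comm, hta] using h0 a ha

lemma mem_minCosetReps_iff (hΦ : IsIrredRootSystem Φ) (hΔ : IsBase Φ Δ)
    (ht : IsHighestRoot Φ Δ t) {x : V ≃ₗ[ℝ] V} :
    x ∈ minCosetReps Φ Δ t ↔
      x ∈ weylGroup Φ ∧ ∀ γ ∈ posRoots Φ Δ, ⟪t, γ⟫ = 0 → x γ ∈ posRoots Φ Δ :=
  and_congr_right fun _ =>
    ⟨fun h γ hγ h0 => h γ hγ.1 ((ht.exists_coeff_iff hΦ hΔ hγ.1).mpr ⟨hγ, h0⟩),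
      fun h γ hγ hc => h γ ((ht.exists_coeff_iff hΦ hΔ hγ).mp hc).1
        ((ht.exists_coeff_iff hΦ hΔ hγ).mp hc).2⟩

lemma eq_of_apply_eq (hΦ : IsIrredRootSystem Φ) (hΔ : IsBase Φ Δ) (ht : IsHighestRoot Φ Δ t)
    (hW : weylGroup Φ ≤ Subgroup.closure (simpleReflections Δ)) {x y : V ≃ₗ[ℝ] V}
    (hx : x ∈ minCosetReps Φ Δ t) (hy : y ∈ minCosetReps Φ Δ t) (hxy : x t = y t) : x = y := by
  rw [ht.mem_minCosetReps_iff hΦ hΔ] at hx hy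
  set u := x⁻¹ * y
  have hu : u ∈ weylGroup Φ := mul_mem (inv_mem hx.1) hy.1
  by_contra hne
  obtain ⟨a, ha, hua⟩ := hΔ.exists_neg_of_ne_one hΦ (hW hu) (inv_mul_eq_one.not.mpr hne)
  have hut : u t = t := by simp [u, LinearEquiv.mul_apply, ← hxy]
  have hta : ⟪t, a⟫ = 0 := by
    have h1 := ht.inner_nonneg hΦ hΔ hua
    rw [inner_neg_right, ← hut, hΦ.inner_apply_apply hu] at h1
    linarith [ht.inner_simple_nonneg hΦ hΔ ha, real_inner_comm a t]
  have hya := hy.2 a (hΔ.simple_mem_posRoots ha) hta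
  have hxua := hx.2 _ hua (by rw [inner_neg_right, ← hut, hΦ.inner_apply_apply hu, hta, neg_zero])
  rw [map_neg, show x (u a) = y a by simp [u, LinearEquiv.mul_apply]] at hxua
  exact hΔ.neg_notMem_posRoots hΦ hya hxua

lemma inv_apply_mem_posRoots (hΦ : IsIrredRootSystem Φ) (hΔ : IsBase Φ Δ)
    (ht : IsHighestRoot Φ Δ t) {x : V ≃ₗ[ℝ] V} (hx : x ∈ weylGroup Φ) {a : V} (ha : a ∈ Δ)
    (hpos : 0 < ⟪a, x t⟫) : x⁻¹ a ∈ posRoots Φ Δ := by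
  have hxa : ⟪t, x⁻¹ a⟫ = ⟪a, x t⟫ := by
    rw [← hΦ.inner_apply_apply hx, real_inner_comm]; simp
  refine (hΔ.mem_posRoots_or_neg_mem hΦ
    ((hΦ.apply_mem_iff (inv_mem hx) a).mpr (hΔ.1 ha))).resolve_right fun h => ?_
  have := ht.inner_nonneg hΦ hΔ h
  rw [inner_neg_right, hxa] at this
  linarith

lemma rootReflection_mul_mem_minCosetReps (hΦ : IsIrredRootSystem Φ) (hΔ : IsBase Φ Δ)
    (ht : IsHighestRoot Φ Δ t) {x : V ≃ₗ[ℝ] V} (hx : x ∈ minCosetReps Φ Δ t) {a : V}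
    (ha : a ∈ Δ) (hpos : 0 < ⟪a, x t⟫) : rootReflection a * x ∈ minCosetReps Φ Δ t := by
  rw [ht.mem_minCosetReps_iff hΦ hΔ] at hx ⊢
  refine ⟨mul_mem (rootReflection_mem_weylGroup (hΔ.1 ha)) hx.1, fun γ hγ h0 => ?_⟩
  refine hΔ.rootReflection_apply_mem_posRoots hΦ ha (hx.2 γ hγ h0) fun h => ?_
  have := hΦ.inner_apply_apply hx.1 t γ
  rw [show x γ = a from h, h0, real_inner_comm] at this
  linarith

open Classical in
lemma exists_minCosetRep_apply_eq (hΦ : IsIrredRootSystem Φ) (hΔ : IsBase Φ Δ)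
    (ht : IsHighestRoot Φ Δ t) (hW : weylGroup Φ ≤ Subgroup.closure (simpleReflections Δ))
    {f : V →ₗ[ℝ] ℝ} (hf : ∀ a ∈ Δ, f (coroot a) = 1) {β : V} (hβ : IsLongRoot Φ β) :
    ∃ x ∈ minCosetReps Φ Δ t, x t = β ∧
      (len Δ x : ℝ) = f (coroot t) - f (coroot β) - if β ∈ posRoots Φ Δ then 0 else 1 := by
  have hwf : Φ.WellFoundedOn fun x y => f y < f x :=
    Set.wellFoundedOn_image.mp ((hΦ.finite.image f).wellFoundedOn (r := (· > ·)))
  refine hwf.induction (P := fun β => IsLongRoot Φ β → ∃ x ∈ minCosetReps Φ Δ t, x t = β ∧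
    (len Δ x : ℝ) = f (coroot t) - f (coroot β) - if β ∈ posRoots Φ Δ then 0 else 1)
    hβ.1 (fun β _ IH hβ => ?_) hβ
  by_cases hβt : β = t
  · subst hβt
    refine ⟨1, (ht.mem_minCosetReps_iff hΦ hΔ).mpr ⟨one_mem _, fun γ hγ _ => hγ⟩, rfl, ?_⟩
    simp [if_pos (ht.mem_posRoots hΦ hΔ), len_one]
  obtain ⟨a, ha, hneg⟩ := ht.exists_inner_neg hΦ hΔ hβ hβt
  have hβ' := hβ.rootReflection_apply hΦ (hΔ.1 ha)
  have hlt : f β < f (rootReflection a β) := by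
    rw [apply_rootReflection_apply (hf a ha)]; linarith
  obtain ⟨x, hx, hxt, hlen⟩ := IH _ hβ'.1 hlt hβ'
  have hpos : 0 < ⟪a, x t⟫ := by
    have := inner_rootReflection a a β
    rw [rootReflection_apply_self, inner_neg_left] at this
    rw [hxt]; linarith
  refine ⟨rootReflection a * x, ht.rootReflection_mul_mem_minCosetReps hΦ hΔ hx ha hpos,
    by rw [LinearEquiv.mul_apply, hxt, rootReflection_rootReflection], ?_⟩
  rw [hΔ.len_rootReflection_mul hΦ (hW hx.1) ha (ht.inv_apply_mem_posRoots hΦ hΔ hx.1 ha hpos)]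
  push_cast
  linarith [hβ.coroot_rootReflection_add_ite hΦ hΔ hf ha hneg]

end IsHighestRoot

/-- For a positive long root `α`, the minimal coset representative
`x_α` (sending the highest root `α̃` to `α`) has length `ht^∨(α̃) − ht^∨(α)`, and
`x_{−α}` has length `ht^∨(α̃) + ht^∨(α) − 1`; here `ht^∨ = f ∘ coroot` where `f` is the
linear functional taking the value `1` on each simple coroot. -/
theorem len_minCosetRep (Φ : Set V) (hΦ : IsIrredRootSystem Φ)
    (Δ : Finset V) (hΔ : IsBase Φ Δ)
    (r : ℝ) (hr : IsGreatest {x : ℝ | ∃ α ∈ Φ, x = ⟪α, α⟫} r)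
    (t : V) (ht : IsHighestRoot Φ Δ t)
    (f : V →ₗ[ℝ] ℝ) (hf : ∀ a ∈ Δ, f (coroot a) = 1)
    (α : V) (hα : α ∈ posRoots Φ Δ) (hαlg : ⟪α, α⟫ = r)
    (xα : V ≃ₗ[ℝ] V) (hxα : xα ∈ minCosetReps Φ Δ t) (hxαt : xα t = α)
    (xnα : V ≃ₗ[ℝ] V) (hxnα : xnα ∈ minCosetReps Φ Δ t) (hxnαt : xnα t = -α) :
    (len Δ xα : ℝ) = f (coroot t) - f (coroot α) ∧
      (len Δ xnα : ℝ) = f (coroot t) + f (coroot α) - 1 := by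
  have hlong : IsLongRoot Φ α := ⟨hα.1, fun γ hγ => hαlg ▸ hr.2 ⟨γ, hγ, rfl⟩⟩
  have hW := hΔ.weylGroup_le_closure hΦ fun a ha =>
    (apply_eq_of_coroot_eq_one (hf a ha)).symm ▸ half_pos (hΦ.inner_self_pos (hΔ.1 ha))
  obtain ⟨y, hy, hyt, hylen⟩ := ht.exists_minCosetRep_apply_eq hΦ hΔ hW hf hlong
  obtain ⟨z, hz, hzt, hzlen⟩ := ht.exists_minCosetRep_apply_eq hΦ hΔ hW hf (hlong.neg hΦ)
  rw [ht.eq_of_apply_eq hΦ hΔ hW hxα hy (hxαt.trans hyt.symm), hylen, if_pos hα,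
    ht.eq_of_apply_eq hΦ hΔ hW hxnα hz (hxnαt.trans hzt.symm), hzlen,
    if_neg (hΔ.neg_notMem_posRoots hΦ hα), coroot_neg, map_neg]
  constructor <;> ring
end

section
/- Let β be a long root and γ a simple root, and set α = s_γ(β). If (β|γ) > 0 then L(α) = L(β) + 1; if (β|γ) = 0 then α = β; if (β|γ) < 0 then L(α) = L(β) − 1, where L is the level function on long roots. -/
open scoped RealInnerProductSpace

variable {V : Type*} [NormedAddCommGroup V] [InnerProductSpace ℝ V]

section AuxLemmas

lemma coeff_unique' {Δ : Finset V} (h : LinearIndependent ℝ (fun a : Δ => (a : V)))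
    {x y : V → ℝ} (hxy : ∑ a ∈ Δ, x a • a = ∑ a ∈ Δ, y a • a) :
    ∀ a ∈ Δ, x a = y a := by
  have h0 : ∑ a ∈ Δ, (x a - y a) • a = 0 := by
    simp [sub_smul, Finset.sum_sub_distrib, hxy]
  have h1 : ∑ a : Δ, (x a - y a) • (a : V) = 0 := by
    rw [Finset.sum_coe_sort Δ (fun a => (x a - y a) • a)]
    exact h0
  have h2 := Fintype.linearIndependent_iff.mp h (fun a : Δ => x a - y a) h1
  intro a ha
  have := h2 ⟨a, ha⟩
  simp only [] at this
  linarith [this]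

lemma simple_pos' {Φ : Set V} {Δ : Finset V} (hΔ1 : (Δ : Set V) ⊆ Φ) {γ : V} (hγ : γ ∈ Δ) :
    γ ∈ posRoots Φ Δ := by
  classical
  refine ⟨hΔ1 hγ, fun v => if v = γ then 1 else 0, ?_⟩
  rw [Finset.sum_eq_single γ]
  · simp
  · intro a _ hne; simp [hne]
  · intro h; exact absurd hγ h

lemma neg_simple_not_pos' {Φ : Set V} {Δ : Finset V}
    (hind : LinearIndependent ℝ (fun a : Δ => (a : V))) {γ : V} (hγ : γ ∈ Δ) :
    -γ ∉ posRoots Φ Δ := by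
  classical
  rintro ⟨-, c, hc⟩
  have hsum : ∑ a ∈ Δ, (c a : ℝ) • a = ∑ a ∈ Δ, (if a = γ then (-1 : ℝ) else 0) • a := by
    rw [← hc, Finset.sum_eq_single γ]
    · simp
    · intro a _ hne; simp [hne]
    · intro h; exact absurd hγ h
  have := coeff_unique' hind hsum γ hγ
  simp at this
  have : (0:ℝ) ≤ (c γ : ℝ) := Nat.cast_nonneg _
  linarith

lemma refl_pos' {Φ : Set V} (hΦ : IsIrredRootSystem Φ) {Δ : Finset V}
    (hΔ1 : (Δ : Set V) ⊆ Φ) (hind : LinearIndependent ℝ (fun a : Δ => (a : V)))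
    (hbase : ∀ g ∈ Φ, ∃ c : V → ℤ, g = ∑ a ∈ Δ, (c a : ℝ) • a ∧
      ((∀ a ∈ Δ, 0 ≤ c a) ∨ (∀ a ∈ Δ, c a ≤ 0)))
    {γ : V} (hγ : γ ∈ Δ) {δ : V} (hδ : δ ∈ Φ) (hpos : δ ∈ posRoots Φ Δ) (hne : δ ≠ γ) :
    δ - (2 * ⟪γ, δ⟫ / ⟪γ, γ⟫) • γ ∈ posRoots Φ Δ := by
  classical
  have hγΦ : γ ∈ Φ := hΔ1 hγ
  obtain ⟨-, c, hc⟩ := hpos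
  set ε := δ - (2 * ⟪γ, δ⟫ / ⟪γ, γ⟫) • γ with hε
  have hεΦ : ε ∈ Φ := hΦ.reflect_mem γ hγΦ δ hδ
  obtain ⟨m, hm⟩ := hΦ.crystallographic γ hγΦ δ hδ
  obtain ⟨d, hd, hsign⟩ := hbase ε hεΦ
  have hεsum : ε = ∑ a ∈ Δ, ((c a : ℝ) - (if a = γ then (m : ℝ) else 0)) • a := by
    rw [hε, hm, hc]
    rw [show ∀ x y : V → ℝ, (∑ a ∈ Δ, (x a - y a) • a) = ∑ a ∈ Δ, x a • a - ∑ a ∈ Δ, y a • a from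
      fun x y => by simp [sub_smul, Finset.sum_sub_distrib]]
    congr 1
    rw [Finset.sum_eq_single γ]
    · simp
    · intro a _ hne'; simp [hne']
    · intro h; exact absurd hγ h
  have heq : ∀ a ∈ Δ, (d a : ℝ) = (c a : ℝ) - (if a = γ then (m : ℝ) else 0) :=
    coeff_unique' (x := fun a => (d a : ℝ))
      (y := fun a => (c a : ℝ) - (if a = γ then (m : ℝ) else 0)) hind
      (by simpa only [← hd] using hεsum)
  have hex : ∃ a ∈ Δ, a ≠ γ ∧ c a ≠ 0 := by
    by_contra h
    push_neg at h
    have hδγ : δ = (c γ : ℝ) • γ := by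
      rw [hc, Finset.sum_eq_single γ]
      · intro a ha hne'; rw [h a ha hne']; simp
      · intro h'; exact absurd hγ h'
    rcases hΦ.reduced γ hγΦ (c γ : ℝ) (hδγ ▸ hδ) with h1 | h1
    · exact hne (by rw [hδγ, h1, one_smul])
    · have : (0:ℝ) ≤ (c γ : ℝ) := Nat.cast_nonneg _
      rw [h1] at this; linarith
  obtain ⟨a₀, ha₀Δ, ha₀γ, ha₀⟩ := hex
  have hd0 : 0 < d a₀ := by
    have h1 := heq a₀ ha₀Δ
    rw [if_neg ha₀γ, sub_zero] at h1
    have hc0 : 0 < c a₀ := Nat.pos_of_ne_zero ha₀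
    have : (0:ℝ) < (d a₀ : ℝ) := by rw [h1]; exact_mod_cast hc0
    exact_mod_cast this
  have hall : ∀ a ∈ Δ, 0 ≤ d a := by
    rcases hsign with h | h
    · exact h
    · exact absurd (h a₀ ha₀Δ) (by omega)
  refine ⟨hεΦ, fun a => (d a).toNat, ?_⟩
  rw [hd]
  refine Finset.sum_congr rfl fun a ha => ?_
  congr 1
  exact_mod_cast (Int.toNat_of_nonneg (hall a ha)).symm

lemma aux_eq' {a g r : ℝ} (hrpos : 0 < r) (hgr : g ≤ r) (hCS : a * a ≤ r * g)
    (hbg : r ≤ a) : a = r ∧ g = r := by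
  constructor <;> nlinarith [sq_nonneg (a - r), sq_nonneg (a + r)]

end AuxLemmas

/-- Let `β` be a long root, `γ` a simple root and `α = s_γ(β)`. If
`(β|γ) > 0` then `L(α) = L(β) + 1`; if `(β|γ) = 0` then `α = β`; if `(β|γ) < 0` then
`L(α) = L(β) − 1`, where `L` is the level function on long roots:
`L(δ) = ht^∨(α̃) − ht^∨(δ)` for `δ > 0` and `ht^∨(α̃) − ht^∨(δ) − 1` for `δ < 0`. -/
theorem level_of_simple_reflection (Φ : Set V) (hΦ : IsIrredRootSystem Φ)
    (Δ : Finset V) (hΔ : IsBase Φ Δ)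
    (hnorm : IsLeast {x : ℝ | ∃ α ∈ Φ, x = ⟪α, α⟫} 1)
    (r : ℝ) (hr : IsGreatest {x : ℝ | ∃ α ∈ Φ, x = ⟪α, α⟫} r)
    (t : V) (ht : IsHighestRoot Φ Δ t)
    (f : V →ₗ[ℝ] ℝ) (hf : ∀ a ∈ Δ, f (coroot a) = 1)
    (β : V) (hβ : β ∈ Φ) (hβlg : ⟪β, β⟫ = r) (γ : V) (hγ : γ ∈ Δ)
    (α : V) (hα : α = β - (2 * ⟪γ, β⟫ / ⟪γ, γ⟫) • γ)
    (Lα Lβ : ℝ)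
    (hLαpos : α ∈ posRoots Φ Δ → Lα = f (coroot t) - f (coroot α))
    (hLαneg : α ∉ posRoots Φ Δ → Lα = f (coroot t) - f (coroot α) - 1)
    (hLβpos : β ∈ posRoots Φ Δ → Lβ = f (coroot t) - f (coroot β))
    (hLβneg : β ∉ posRoots Φ Δ → Lβ = f (coroot t) - f (coroot β) - 1) :
    (0 < ⟪β, γ⟫ → Lα = Lβ + 1) ∧ (⟪β, γ⟫ = 0 → α = β) ∧
      (⟪β, γ⟫ < 0 → Lα = Lβ - 1) := by
  classical
  obtain ⟨hΔ1, hind, hbase⟩ := hΔ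
  have hγΦ : γ ∈ Φ := hΔ1 hγ
  have hγγ1 : (1:ℝ) ≤ ⟪γ, γ⟫ := hnorm.2 ⟨γ, hγΦ, rfl⟩
  have hγγpos : (0:ℝ) < ⟪γ, γ⟫ := by linarith
  have hgg : ⟪γ, γ⟫ ≠ 0 := ne_of_gt hγγpos
  have hr1 : (1:ℝ) ≤ r := hnorm.2 hr.1
  have hrpos : (0:ℝ) < r := by linarith
  have hrne : r ≠ 0 := ne_of_gt hrpos
  have hγr : ⟪γ, γ⟫ ≤ r := hr.2 ⟨γ, hγΦ, rfl⟩
  have hαΦ : α ∈ Φ := hα ▸ hΦ.reflect_mem γ hγΦ β hβ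
  have hαα : ⟪α, α⟫ = r := by
    rw [hα]
    simp only [inner_sub_left, inner_sub_right, real_inner_smul_left, real_inner_smul_right]
    rw [real_inner_comm β γ, hβlg]
    field_simp
    ring
  obtain ⟨n, hn⟩ := hΦ.crystallographic β hβ γ hγΦ
  rw [hβlg] at hn
  have hnr : (n:ℝ) * r = 2 * ⟪β, γ⟫ := by
    field_simp at hn
    linarith
  have hfγ : f γ = ⟪γ, γ⟫ / 2 := by
    have h1 := hf γ hγ
    rw [coroot, map_smul, smul_eq_mul] at h1
    field_simp at h1
    linarith
  have hsimp : 2 * ⟪β, γ⟫ / ⟪γ, γ⟫ * (⟪γ, γ⟫ / 2) = ⟪β, γ⟫ := by field_simp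
  have hkey : f (coroot α) = f (coroot β) - n := by
    rw [coroot, coroot, hαα, hβlg, hα]
    simp only [map_smul, map_sub, smul_eq_mul, hfγ]
    rw [real_inner_comm β γ, hsimp, ← hn]
    ring
  have hγα : ⟪γ, α⟫ = -⟪γ, β⟫ := by
    rw [hα, inner_sub_right, real_inner_smul_right]
    field_simp
    ring
  have hswap : β = α - (2 * ⟪γ, α⟫ / ⟪γ, γ⟫) • γ := by
    rw [hγα, hα, show 2 * -⟪γ, β⟫ / ⟪γ, γ⟫ = -(2 * ⟪γ, β⟫ / ⟪γ, γ⟫) by ring, neg_smul,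
      sub_neg_eq_add, sub_add_cancel]
  have hCS : ⟪β, γ⟫ * ⟪β, γ⟫ ≤ r * ⟪γ, γ⟫ := by
    have h1 := real_inner_mul_inner_self_le β γ
    rwa [hβlg] at h1
  have hsγ : ∀ x : V, x = γ → x - (2 * ⟪γ, x⟫ / ⟪γ, γ⟫) • γ = -γ := by
    intro x hx
    rw [hx, show 2 * ⟪γ, γ⟫ / ⟪γ, γ⟫ = 2 by field_simp, two_smul]
    abel
  have hcorneg : f (coroot (-γ)) = -1 := by
    have h1 : coroot (-γ) = -coroot γ := by
      rw [coroot, coroot, inner_neg_neg, smul_neg]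
    rw [h1, map_neg, hf γ hγ]
  have hgen : β ≠ γ → β ≠ -γ → Lα = Lβ + n := by
    intro hbγ hbγ'
    have hiff : β ∈ posRoots Φ Δ ↔ α ∈ posRoots Φ Δ := by
      constructor
      · intro hp
        have h2 := refl_pos' hΦ hΔ1 hind hbase hγ hβ hp hbγ
        rwa [← hα] at h2
      · intro hp
        have hαγ : α ≠ γ := by
          intro h
          exact hbγ' (hswap.trans (hsγ α h))
        have h2 := refl_pos' hΦ hΔ1 hind hbase hγ hαΦ hp hαγ
        rwa [← hswap] at h2
    by_cases hp : β ∈ posRoots Φ Δ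
    · have h1 := hLαpos (hiff.mp hp)
      have h2 := hLβpos hp
      rw [hkey] at h1
      linarith
    · have h1 := hLαneg (fun h => hp (hiff.mpr h))
      have h2 := hLβneg hp
      rw [hkey] at h1
      linarith
  refine ⟨?_, ?_, ?_⟩
  · intro hpos
    by_cases hbγ : β = γ
    · have hαeq : α = -γ := by
        rw [hα, hbγ]
        exact hsγ γ rfl
      have hβpos : β ∈ posRoots Φ Δ := hbγ ▸ simple_pos' hΔ1 hγ
      have hαneg : α ∉ posRoots Φ Δ := hαeq ▸ neg_simple_not_pos' hind hγ
      have hcα : f (coroot α) = -1 := by rw [hαeq]; exact hcorneg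
      have hcβ : f (coroot β) = 1 := by rw [hbγ]; exact hf γ hγ
      have h1 := hLαneg hαneg
      have h2 := hLβpos hβpos
      rw [hcα] at h1
      rw [hcβ] at h2
      linarith
    · have hbγ' : β ≠ -γ := by
        intro h
        rw [h, inner_neg_left] at hpos
        linarith
      have hn1 : (n:ℝ) = 1 := by
        have hnpos : (0:ℝ) < n := by
          rw [← hn]
          positivity
        have hn1' : 1 ≤ n := by exact_mod_cast hnpos
        by_contra hne1
        have h2n : (2:ℝ) ≤ n := by
          have : n ≠ 1 := fun h => hne1 (by exact_mod_cast h)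
          have : 2 ≤ n := by omega
          exact_mod_cast this
        have hbg : r ≤ ⟪β, γ⟫ := by nlinarith [hnr, h2n, hrpos]
        obtain ⟨h1, h2⟩ := aux_eq' hrpos hγr hCS hbg
        have h0 : ⟪β - γ, β - γ⟫ = (0:ℝ) := by
          simp only [inner_sub_left, inner_sub_right, hβlg, real_inner_comm β γ, h1, h2]
          ring
        exact hbγ (sub_eq_zero.mp (inner_self_eq_zero.mp h0))
      rw [hgen hbγ hbγ', hn1]
  · intro h0
    have h0' : ⟪γ, β⟫ = 0 := by rw [real_inner_comm]; exact h0
    rw [hα, h0']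
    simp
  · intro hneg
    by_cases hbγ' : β = -γ
    · have hαeq : α = γ := by
        rw [hα, hbγ', inner_neg_right,
          show 2 * -⟪γ, γ⟫ / ⟪γ, γ⟫ = -2 by field_simp, neg_smul, sub_neg_eq_add, two_smul]
        abel
      have hβneg : β ∉ posRoots Φ Δ := hbγ' ▸ neg_simple_not_pos' hind hγ
      have hαpos : α ∈ posRoots Φ Δ := hαeq ▸ simple_pos' hΔ1 hγ
      have hcα : f (coroot α) = 1 := by rw [hαeq]; exact hf γ hγ
      have hcβ : f (coroot β) = -1 := by rw [hbγ']; exact hcorneg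
      have h1 := hLαpos hαpos
      have h2 := hLβneg hβneg
      rw [hcα] at h1
      rw [hcβ] at h2
      linarith
    · have hbγ : β ≠ γ := by
        intro h
        rw [h] at hneg
        linarith
      have hn1 : (n:ℝ) = -1 := by
        have hnneg : (n:ℝ) < 0 := by
          rw [← hn]
          have : 2 * ⟪β, γ⟫ < 0 := by linarith
          exact div_neg_of_neg_of_pos this hrpos
        have hn1' : n ≤ -1 := by
          have : (n:ℝ) < 0 := hnneg
          have : n < 0 := by exact_mod_cast this
          omega
        by_contra hne1
        have h2n : (n:ℝ) ≤ -2 := by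
          have : n ≠ -1 := fun h => hne1 (by exact_mod_cast h)
          have : n ≤ -2 := by omega
          exact_mod_cast this
        have hbg : ⟪β, γ⟫ ≤ -r := by nlinarith [hnr, h2n, hrpos]
        have hCS' : (-⟪β, γ⟫) * (-⟪β, γ⟫) ≤ r * ⟪γ, γ⟫ := by rw [neg_mul_neg]; exact hCS
        have hbg' : r ≤ -⟪β, γ⟫ := by linarith
        obtain ⟨h1', h2⟩ := aux_eq' hrpos hγr hCS' hbg'
        have h1 : ⟪β, γ⟫ = -r := by linarith
        have h0 : ⟪β + γ, β + γ⟫ = (0:ℝ) := by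
          simp only [inner_add_left, inner_add_right, hβlg, real_inner_comm β γ, h1, h2]
          ring
        have : β + γ = 0 := inner_self_eq_zero.mp h0
        exact hbγ' (by rw [eq_neg_iff_add_eq_zero]; exact this)
      rw [hgen hbγ hbγ', hn1]
      ring
end

section
/- Let α and β be positive long roots with α ≤ β in the dominance order (β − α a nonnegative integer combination of simple roots). Then there exists a sequence of long roots β = β₀, β₁, …, β_k = α and simple roots γ₁, …, γ_k such that β_i = s_{γ_i}(β_{i−1}) and L(β_i) = L(β_{i−1}) + 1 for all i (a 'simple path' from β to α). -/
open scoped RealInnerProductSpace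

variable {V : Type*} [NormedAddCommGroup V] [InnerProductSpace ℝ V]

/-!
Induct on the height of `β - α`. As `0 < ⟪β - α, β - α⟫`, some simple root `a` occurring in
`β - α` has `0 < ⟪a, β - α⟫`, hence `0 < ⟪a, β⟫` or `⟪a, α⟫ < 0`. For a long root `y` and a root
`x ≠ y` with `0 < ⟪x, y⟫` one has `2⟪x, y⟫ = ⟪y, y⟫`, so `s_a β = β - N a` (resp.
`s_a α = α + N a`) with `N ⟪a, a⟫ = r`: we step from `β` down to `s_a β`, resp. finish with the
step `s_a α ↦ α`, and `f ∘ coroot` drops by `N ⟪a, a⟫ / r = 1`. The new root stays between `α`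
and `β` because the `a`-coefficient of a long root, times `⟪a, a⟫`, is a multiple of `r` (the
coroot of a long root is an integral combination of simple coroots), so the `a`-coefficient of
`β - α` is at least `N`.
-/

open Finset Relation

theorem Relation.ReflTransGen.exists_nat_seq {X L : Type*} [Nonempty L] {R : X → L → X → Prop}
    {x y : X} (h : ReflTransGen (fun x y => ∃ g, R x g y) x y) :
    ∃ (k : ℕ) (b : ℕ → X) (g : ℕ → L), b 0 = x ∧ b k = y ∧
      ∀ i < k, R (b i) (g i) (b (i + 1)) := by
  induction h using Relation.ReflTransGen.head_induction_on with
  | refl => exact ⟨0, fun _ => y, fun _ => Classical.arbitrary L, rfl, rfl, by simp⟩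
  | head hxz _ ih =>
    obtain ⟨g₀, hg₀⟩ := hxz
    obtain ⟨k, b, g, hb0, hbk, hstep⟩ := ih
    refine ⟨k + 1, fun | 0 => _ | i + 1 => b i, fun | 0 => g₀ | i + 1 => g i, rfl, hbk, ?_⟩
    rintro (_ | i) hi
    · simpa [hb0] using hg₀
    · exact hstep i (by omega)

theorem sum_update_sub_add {ι : Type*} [DecidableEq ι] {s : Finset ι} {c : ι → ℕ} {a : ι}
    (ha : a ∈ s) {N : ℕ} (hN : N ≤ c a) :
    ∑ x ∈ s, Function.update c a (c a - N) x + N = ∑ x ∈ s, c x := by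
  rw [← add_sum_erase _ _ ha, Function.update_self, ← add_sum_erase s c ha,
    sum_congr rfl fun x hx => Function.update_of_ne (ne_of_mem_erase hx) _ _]
  omega

section LinearAlgebra

variable {M : Type*} [AddCommGroup M] [Module ℝ M] {Δ : Finset M}

theorem coeff_eq_of_sum_smul_eq (hli : LinearIndependent ℝ (fun a : Δ => (a : M)))
    {x y : M → ℝ} (h : ∑ a ∈ Δ, x a • a = ∑ a ∈ Δ, y a • a) : ∀ a ∈ Δ, x a = y a := by
  intro a ha
  have h0 : ∑ b : Δ, (x b - y b) • (b : M) = 0 := by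
    rw [sum_coe_sort Δ (fun z => (x z - y z) • z)]
    simp only [sub_smul, sum_sub_distrib, h, sub_self]
  exact sub_eq_zero.mp (Fintype.linearIndependent_iff.mp hli _ h0 ⟨a, ha⟩)

theorem sum_single_smul [DecidableEq M] {a : M} (ha : a ∈ Δ) (N : ℕ) :
    ∑ x ∈ Δ, ((Pi.single a N : M → ℕ) x : ℝ) • x = (N : ℝ) • a := by
  simp [Pi.single_apply, ite_smul, ha]

theorem sum_update_sub_smul [DecidableEq M] {c : M → ℕ} {a : M} (ha : a ∈ Δ) {N : ℕ}
    (hN : N ≤ c a) :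
    ∑ x ∈ Δ, (Function.update c a (c a - N) x : ℝ) • x =
      ∑ x ∈ Δ, (c x : ℝ) • x - (N : ℝ) • a := by
  rw [← add_sum_erase _ _ ha, ← add_sum_erase _ _ ha, Function.update_self, Nat.cast_sub hN,
    sub_smul, sum_congr rfl fun x hx => by rw [Function.update_of_ne (ne_of_mem_erase hx)]]
  abel

end LinearAlgebra

theorem exists_mem_coeff_pos_inner_pos {Δ : Finset V} {v : V} (hv : v ≠ 0) {c : V → ℕ}
    (hc : v = ∑ a ∈ Δ, (c a : ℝ) • a) : ∃ a ∈ Δ, 0 < c a ∧ 0 < ⟪a, v⟫ := by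
  have hsum : ∑ _a ∈ Δ, (0 : ℝ) < ∑ a ∈ Δ, (c a : ℝ) * ⟪a, v⟫ :=
    calc ∑ _a ∈ Δ, (0 : ℝ) = 0 := sum_const_zero
      _ < ⟪v, v⟫ := real_inner_self_pos.mpr hv
      _ = ∑ a ∈ Δ, (c a : ℝ) * ⟪a, v⟫ := by
        conv_lhs => arg 2; rw [hc]
        simp only [sum_inner, real_inner_smul_left]
  obtain ⟨a, ha, hpos⟩ := exists_lt_of_sum_lt hsum
  rcases pos_and_pos_or_neg_and_neg_of_mul_pos hpos with ⟨hca, hav⟩ | ⟨hca, -⟩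
  · exact ⟨a, ha, by exact_mod_cast hca, hav⟩
  · exact absurd hca (Nat.cast_nonneg _).not_gt

theorem inner_self_reflect (a x : V) (ha : ⟪a, a⟫ ≠ 0) :
    ⟪x - (2 * ⟪a, x⟫ / ⟪a, a⟫) • a, x - (2 * ⟪a, x⟫ / ⟪a, a⟫) • a⟫ = ⟪x, x⟫ := by
  simp only [inner_sub_left, inner_sub_right, real_inner_smul_left, real_inner_smul_right,
    real_inner_comm x a]
  field_simp
  ring

theorem map_coroot_sub_smul (f : V →ₗ[ℝ] ℝ) {a x : V} {m r : ℝ} (hr : r ≠ 0) (ha : ⟪a, a⟫ ≠ 0)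
    (hfa : f (coroot a) = 1) (hx : ⟪x, x⟫ = r) (hx' : ⟪x - m • a, x - m • a⟫ = r)
    (hma : m * ⟪a, a⟫ = r) : f (coroot (x - m • a)) = f (coroot x) - 1 := by
  simp only [coroot, map_smul, map_sub, smul_eq_mul, hx, hx'] at hfa ⊢
  field_simp at hfa ⊢
  linear_combination -m * hfa - hma

section RootSystem

variable {Φ : Set V} {Δ : Finset V} {r : ℝ}

theorem IsIrredRootSystem.inner_self_pos_s14 (hΦ : IsIrredRootSystem Φ) {x : V} (hx : x ∈ Φ) :
    0 < ⟪x, x⟫ :=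
  real_inner_self_pos.mpr fun h => hΦ.nonzero (h ▸ hx)

theorem IsIrredRootSystem.pos_of_isGreatest (hΦ : IsIrredRootSystem Φ)
    (hr : IsGreatest {x : ℝ | ∃ α ∈ Φ, x = ⟪α, α⟫} r) : 0 < r := by
  obtain ⟨γ, hγ⟩ := hΦ.nonempty
  exact (hΦ.inner_self_pos_s14 hγ).trans_le (hr.2 ⟨γ, hγ, rfl⟩)

theorem IsIrredRootSystem.neg_mem_s14 (hΦ : IsIrredRootSystem Φ) {a : V} (ha : a ∈ Φ) : -a ∈ Φ := by
  have h := hΦ.reflect_mem a ha a ha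
  rwa [mul_div_assoc, div_self (hΦ.inner_self_pos_s14 ha).ne', mul_one, two_smul,
    sub_add_cancel_left] at h

theorem IsIrredRootSystem.two_mul_inner_eq (hΦ : IsIrredRootSystem Φ)
    (hr : IsGreatest {x : ℝ | ∃ α ∈ Φ, x = ⟪α, α⟫} r) {x y : V} (hx : x ∈ Φ) (hy : y ∈ Φ)
    (hyr : ⟪y, y⟫ = r) (hne : x ≠ y) (hpos : 0 < ⟪x, y⟫) : 2 * ⟪x, y⟫ = r := by
  have hr0 := hΦ.pos_of_isGreatest hr
  obtain ⟨z, hz⟩ := hΦ.crystallographic y hy x hx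
  rw [real_inner_comm, hyr, div_eq_iff hr0.ne'] at hz
  have hz0 : (0 : ℤ) < z := by
    have : (0 : ℝ) < z := by nlinarith
    exact_mod_cast this
  obtain hz1 | hz2 : z = 1 ∨ 2 ≤ z := by omega
  · rw [hz, hz1, Int.cast_one, one_mul]
  -- A Cartan integer `≥ 2` against the long root `y` is the equality case of Cauchy–Schwarz.
  have hz2' : (2 : ℝ) ≤ z := by exact_mod_cast hz2
  have hxx : ⟪x, x⟫ ≤ r := hr.2 ⟨x, hx, rfl⟩
  have hcs := real_inner_mul_inner_self_le x y
  have hxy : ⟪x, y⟫ = r := by nlinarith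
  have hxx' : ⟪x, x⟫ = r := by nlinarith
  refine absurd (sub_eq_zero.mp ((inner_self_eq_zero (𝕜 := ℝ)).mp ?_)).symm hne
  rw [inner_sub_left, inner_sub_right, inner_sub_right, real_inner_comm x y]
  linarith

theorem IsIrredRootSystem.exists_nat_reflect_coeff (hΦ : IsIrredRootSystem Φ)
    (hr : IsGreatest {x : ℝ | ∃ α ∈ Φ, x = ⟪α, α⟫} r) {x y : V} (hx : x ∈ Φ) (hy : y ∈ Φ)
    (hyr : ⟪y, y⟫ = r) (hne : x ≠ y) (hpos : 0 < ⟪x, y⟫) :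
    ∃ N : ℕ, 0 < N ∧ 2 * ⟪x, y⟫ / ⟪x, x⟫ = N ∧ (N : ℝ) * ⟪x, x⟫ = r := by
  have hxx := hΦ.inner_self_pos_s14 hx
  obtain ⟨z, hz⟩ := hΦ.crystallographic x hx y hy
  have hz0 : (0 : ℝ) < z := hz ▸ div_pos (by linarith) hxx
  obtain ⟨N, rfl⟩ := Int.eq_ofNat_of_zero_le (by exact_mod_cast hz0.le : (0 : ℤ) ≤ z)
  rw [Int.cast_natCast] at hz hz0
  refine ⟨N, by exact_mod_cast hz0, hz, ?_⟩
  rw [← hz, div_mul_cancel₀ _ hxx.ne', hΦ.two_mul_inner_eq hr hx hy hyr hne hpos]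

theorem exists_coeff_pos_of_ne (hΦ : IsIrredRootSystem Φ) (hΔ : IsBase Φ Δ) {γ a : V}
    (hγ : γ ∈ Φ) (ha : a ∈ Δ) (hne : γ ≠ a) {c : V → ℕ} (hc : γ = ∑ x ∈ Δ, (c x : ℝ) • x) :
    ∃ x ∈ Δ, x ≠ a ∧ 0 < c x := by
  by_contra! h
  have hγa : γ = (c a : ℝ) • a := by
    rw [hc, sum_eq_single_of_mem a ha fun x hx hxa => by simp [Nat.le_zero.mp (h x hx hxa)]]
  rcases hΦ.reduced a (hΔ.1 ha) _ (hγa ▸ hγ) with h1 | h1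
  · exact hne (by rw [hγa, h1, one_smul])
  · linarith [(c a).cast_nonneg (α := ℝ)]

theorem eq_of_mem_posRoots_of_le_simple (hΦ : IsIrredRootSystem Φ) (hΔ : IsBase Φ Δ)
    {α a : V} (hα : α ∈ posRoots Φ Δ) (ha : a ∈ Δ) {c : V → ℕ}
    (hc : a - α = ∑ x ∈ Δ, (c x : ℝ) • x) : α = a := by
  classical
  obtain ⟨hαΦ, d, hd⟩ := hα
  by_contra hne
  obtain ⟨x, hx, hxa, hdx⟩ := exists_coeff_pos_of_ne hΦ hΔ hαΦ ha hne hd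
  have key := coeff_eq_of_sum_smul_eq hΔ.2.1 (x := fun x => (d x : ℝ) + c x)
    (y := fun x => if x = a then 1 else 0)
    (by simp [add_smul, sum_add_distrib, ← hd, ← hc, ite_smul, ha]) x hx
  simp only [if_neg hxa] at key
  have : (0 : ℝ) < d x := by exact_mod_cast hdx
  linarith [(c x).cast_nonneg (α := ℝ)]

theorem le_coeff_of_sub_smul_mem (hΦ : IsIrredRootSystem Φ) (hΔ : IsBase Φ Δ) {γ a : V}
    (hγ : γ ∈ Φ) (ha : a ∈ Δ) (hne : γ ≠ a) {c : V → ℕ} (hc : γ = ∑ x ∈ Δ, (c x : ℝ) • x)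
    {N : ℕ} (hmem : γ - (N : ℝ) • a ∈ Φ) : N ≤ c a := by
  classical
  obtain ⟨e, he, hsign⟩ := hΔ.2.2 _ hmem
  have key : ∀ x ∈ Δ, (e x : ℝ) = c x - if x = a then (N : ℝ) else 0 := by
    refine coeff_eq_of_sum_smul_eq hΔ.2.1 (he.symm.trans ?_)
    simp [hc, sub_smul, sum_sub_distrib, ite_smul, ha]
  obtain ⟨x₀, hx₀, hx₀a, hcx₀⟩ := exists_coeff_pos_of_ne hΦ hΔ hγ ha hne hc
  have hex₀ : (0 : ℝ) < e x₀ := by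
    rw [key x₀ hx₀, if_neg hx₀a, sub_zero]
    exact_mod_cast hcx₀
  have hea : (0 : ℝ) ≤ e a := by
    rcases hsign with h | h
    · exact_mod_cast h a ha
    · exact absurd hex₀ (not_lt.mpr (by exact_mod_cast h x₀ hx₀))
  rw [key a ha, if_pos rfl, sub_nonneg] at hea
  exact_mod_cast hea

theorem exists_coeff_mul_eq_nat_mul (hΦ : IsIrredRootSystem Φ) (hΔ : IsBase Φ Δ)
    (hr : IsGreatest {x : ℝ | ∃ α ∈ Φ, x = ⟪α, α⟫} r) {γ : V} (hγ : γ ∈ Φ) (hγr : ⟪γ, γ⟫ = r)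
    {c : V → ℕ} (hc : γ = ∑ x ∈ Δ, (c x : ℝ) • x) :
    ∀ a ∈ Δ, ∃ j : ℕ, (c a : ℝ) * ⟪a, a⟫ = j * r := by
  classical
  obtain ⟨n, hn⟩ : ∃ n, ∑ x ∈ Δ, c x = n := ⟨_, rfl⟩
  induction n using Nat.strong_induction_on generalizing γ c with
  | _ n ih =>
  intro a ha
  by_cases hγΔ : γ ∈ Δ
  · have hca := coeff_eq_of_sum_smul_eq hΔ.2.1 (x := fun x => (c x : ℝ))
      (y := fun x => if x = γ then 1 else 0) (by simp [← hc, ite_smul, hγΔ]) a ha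
    refine ⟨if a = γ then 1 else 0, ?_⟩
    split_ifs at hca ⊢ with h
    · rw [hca, h, hγr, Nat.cast_one]
    · rw [hca, Nat.cast_zero, zero_mul, zero_mul]
  obtain ⟨b, hb, -, hbγ⟩ := exists_mem_coeff_pos_inner_pos (fun h => hΦ.nonzero (h ▸ hγ)) hc
  have hne : γ ≠ b := fun h => hγΔ (h ▸ hb)
  obtain ⟨N, hN0, hN, hNr⟩ := hΦ.exists_nat_reflect_coeff hr (hΔ.1 hb) hγ hγr hne.symm hbγ
  have hmem : γ - (N : ℝ) • b ∈ Φ := hN ▸ hΦ.reflect_mem b (hΔ.1 hb) γ hγ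
  have hlong : ⟪γ - (N : ℝ) • b, γ - (N : ℝ) • b⟫ = r := by
    rw [← hN, inner_self_reflect b γ (hΦ.inner_self_pos_s14 (hΔ.1 hb)).ne', hγr]
  have hNc := le_coeff_of_sub_smul_mem hΦ hΔ hγ hb hne hc hmem
  have hsum := sum_update_sub_add hb hNc
  obtain ⟨j, hj⟩ := ih _ (by omega) hmem hlong (c := Function.update c b (c b - N))
    (by rw [sum_update_sub_smul hb hNc, hc]) rfl a ha
  by_cases hab : a = b
  · subst hab
    refine ⟨j + 1, ?_⟩
    rw [Function.update_self, Nat.cast_sub hNc] at hj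
    push_cast
    linear_combination hj + hNr
  · rw [Function.update_of_ne hab] at hj
    exact ⟨j, hj⟩

theorem le_coeff_mul_inner_self (hΦ : IsIrredRootSystem Φ) (hΔ : IsBase Φ Δ)
    (hr : IsGreatest {x : ℝ | ∃ α ∈ Φ, x = ⟪α, α⟫} r) {α β : V} (hα : α ∈ posRoots Φ Δ)
    (hαr : ⟪α, α⟫ = r) (hβ : β ∈ posRoots Φ Δ) (hβr : ⟪β, β⟫ = r) {c : V → ℕ}
    (hc : β - α = ∑ x ∈ Δ, (c x : ℝ) • x) {a : V} (ha : a ∈ Δ) (hca : 0 < c a) :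
    r ≤ c a * ⟪a, a⟫ := by
  obtain ⟨hαΦ, dα, hdα⟩ := hα
  obtain ⟨hβΦ, dβ, hdβ⟩ := hβ
  obtain ⟨j₁, hj₁⟩ := exists_coeff_mul_eq_nat_mul hΦ hΔ hr hαΦ hαr hdα a ha
  obtain ⟨j₂, hj₂⟩ := exists_coeff_mul_eq_nat_mul hΦ hΔ hr hβΦ hβr hdβ a ha
  have hsplit : (dβ a : ℝ) = dα a + c a :=
    coeff_eq_of_sum_smul_eq hΔ.2.1 (x := fun x => (dβ x : ℝ)) (y := fun x => (dα x : ℝ) + c x)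
      (by simp only [add_smul, sum_add_distrib, ← hdα, ← hdβ, ← hc, add_sub_cancel]) a ha
  have hr0 := hΦ.pos_of_isGreatest hr
  have hcj : (c a : ℝ) * ⟪a, a⟫ = ((j₂ : ℝ) - j₁) * r := by
    rw [sub_mul, ← hj₁, ← hj₂, hsplit]
    ring
  have hj : j₁ < j₂ := by
    have : (0 : ℝ) < ((j₂ : ℝ) - j₁) * r :=
      hcj ▸ mul_pos (by exact_mod_cast hca) (hΦ.inner_self_pos_s14 (hΔ.1 ha))
    have : (j₁ : ℝ) < j₂ := by nlinarith
    exact_mod_cast this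
  have : (j₁ : ℝ) + 1 ≤ j₂ := by exact_mod_cast hj
  nlinarith

theorem mem_posRoots_of_sub_eq_sum {x y : V} (hy : y ∈ Φ) (hx : x ∈ posRoots Φ Δ) {c : V → ℕ}
    (h : y - x = ∑ a ∈ Δ, (c a : ℝ) • a) : y ∈ posRoots Φ Δ := by
  obtain ⟨-, d, hd⟩ := hx
  refine ⟨hy, d + c, ?_⟩
  simp only [Pi.add_apply, Nat.cast_add, add_smul, sum_add_distrib, ← hd, ← h, add_sub_cancel]

theorem exists_sum_smul_eq_sub_smul_of_long (hΦ : IsIrredRootSystem Φ) (hΔ : IsBase Φ Δ)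
    (hr : IsGreatest {x : ℝ | ∃ α ∈ Φ, x = ⟪α, α⟫} r) {α β : V} (hα : α ∈ posRoots Φ Δ)
    (hαr : ⟪α, α⟫ = r) (hβ : β ∈ posRoots Φ Δ) (hβr : ⟪β, β⟫ = r) {c : V → ℕ}
    (hc : β - α = ∑ x ∈ Δ, (c x : ℝ) • x) {a : V} (ha : a ∈ Δ) (hca : 0 < c a) {N : ℕ}
    (hN0 : 0 < N) (hNr : (N : ℝ) * ⟪a, a⟫ = r) :
    ∃ c' : V → ℕ, β - α - (N : ℝ) • a = ∑ x ∈ Δ, (c' x : ℝ) • x ∧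
      ∑ x ∈ Δ, c' x < ∑ x ∈ Δ, c x := by
  classical
  have hNc : N ≤ c a := by
    have := hNr.trans_le (le_coeff_mul_inner_self hΦ hΔ hr hα hαr hβ hβr hc ha hca)
    exact_mod_cast le_of_mul_le_mul_right this (hΦ.inner_self_pos_s14 (hΔ.1 ha))
  have hsum := sum_update_sub_add ha hNc
  exact ⟨_, by rw [hc, sum_update_sub_smul ha hNc], by omega⟩

theorem neg_notMem_posRoots (hΦ : IsIrredRootSystem Φ) (hΔ : IsBase Φ Δ) {a : V} (ha : a ∈ Δ) :
    -a ∉ posRoots Φ Δ := by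
  classical
  intro hneg
  have h2a : a - -a = ∑ x ∈ Δ, ((Pi.single a 2 : V → ℕ) x : ℝ) • x := by
    rw [sum_single_smul ha, sub_neg_eq_add, Nat.cast_ofNat, two_smul]
  have h := eq_of_mem_posRoots_of_le_simple hΦ hΔ hneg ha h2a
  have h0 : (2 : ℝ) • a = 0 := by
    rw [two_smul]
    nth_rewrite 1 [← h]
    exact neg_add_cancel a
  exact hΦ.nonzero ((smul_eq_zero.mp h0).resolve_left two_ne_zero ▸ hΔ.1 ha)

end RootSystem

def IsSimpleStep (Φ : Set V) (Δ : Finset V) (r : ℝ) (f : V →ₗ[ℝ] ℝ) (x g y : V) : Prop :=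
  g ∈ Δ ∧ y = x - (2 * ⟪g, x⟫ / ⟪g, g⟫) • g ∧ y ∈ posRoots Φ Δ ∧ ⟪y, y⟫ = r ∧
    f (coroot y) = f (coroot x) - 1

section SimplePath

variable {Φ : Set V} {Δ : Finset V} {r : ℝ} {f : V →ₗ[ℝ] ℝ}

theorem isSimpleStep_sub_nat_smul (hΦ : IsIrredRootSystem Φ) (hΔ : IsBase Φ Δ)
    (hr : IsGreatest {x : ℝ | ∃ α ∈ Φ, x = ⟪α, α⟫} r) (hf : ∀ a ∈ Δ, f (coroot a) = 1)
    {x a : V} (ha : a ∈ Δ) (hx : ⟪x, x⟫ = r) {N : ℕ} (hN : 2 * ⟪a, x⟫ / ⟪a, a⟫ = N)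
    (hNr : (N : ℝ) * ⟪a, a⟫ = r) (hpos : x - (N : ℝ) • a ∈ posRoots Φ Δ) :
    IsSimpleStep Φ Δ r f x a (x - (N : ℝ) • a) := by
  have haa := (hΦ.inner_self_pos_s14 (hΔ.1 ha)).ne'
  have hlong : ⟪x - (N : ℝ) • a, x - (N : ℝ) • a⟫ = r := by
    rw [← hN, inner_self_reflect a x haa, hx]
  exact ⟨ha, by rw [hN], hpos, hlong,
    map_coroot_sub_smul f (hΦ.pos_of_isGreatest hr).ne' haa (hf a ha) hx hlong hNr⟩

theorem exists_isSimpleStep_of_inner_pos (hΦ : IsIrredRootSystem Φ) (hΔ : IsBase Φ Δ)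
    (hr : IsGreatest {x : ℝ | ∃ α ∈ Φ, x = ⟪α, α⟫} r) (hf : ∀ a ∈ Δ, f (coroot a) = 1)
    {α β : V} (hα : α ∈ posRoots Φ Δ) (hαr : ⟪α, α⟫ = r) (hβ : β ∈ posRoots Φ Δ)
    (hβr : ⟪β, β⟫ = r) (hne : β ≠ α) {c : V → ℕ} (hc : β - α = ∑ x ∈ Δ, (c x : ℝ) • x)
    {a : V} (ha : a ∈ Δ) (hca : 0 < c a) (hβa : 0 < ⟪a, β⟫) :
    ∃ (β' : V) (c' : V → ℕ), IsSimpleStep Φ Δ r f β a β' ∧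
      β' - α = ∑ x ∈ Δ, (c' x : ℝ) • x ∧ ∑ x ∈ Δ, c' x < ∑ x ∈ Δ, c x := by
  have hβa' : a ≠ β := by
    rintro rfl
    exact hne (eq_of_mem_posRoots_of_le_simple hΦ hΔ hα ha hc).symm
  obtain ⟨N, hN0, hN, hNr⟩ := hΦ.exists_nat_reflect_coeff hr (hΔ.1 ha) hβ.1 hβr hβa' hβa
  obtain ⟨c', hc', hlt⟩ :=
    exists_sum_smul_eq_sub_smul_of_long hΦ hΔ hr hα hαr hβ hβr hc ha hca hN0 hNr
  have hc'' : β - (N : ℝ) • a - α = ∑ x ∈ Δ, (c' x : ℝ) • x := by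
    rw [← hc']
    abel
  have hβ' : β - (N : ℝ) • a ∈ posRoots Φ Δ :=
    mem_posRoots_of_sub_eq_sum (hN ▸ hΦ.reflect_mem a (hΔ.1 ha) β hβ.1) hα hc''
  exact ⟨_, c', isSimpleStep_sub_nat_smul hΦ hΔ hr hf ha hβr hN hNr hβ', hc'', hlt⟩

theorem exists_isSimpleStep_of_inner_neg (hΦ : IsIrredRootSystem Φ) (hΔ : IsBase Φ Δ)
    (hr : IsGreatest {x : ℝ | ∃ α ∈ Φ, x = ⟪α, α⟫} r) (hf : ∀ a ∈ Δ, f (coroot a) = 1)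
    {α β : V} (hα : α ∈ posRoots Φ Δ) (hαr : ⟪α, α⟫ = r) (hβ : β ∈ posRoots Φ Δ)
    (hβr : ⟪β, β⟫ = r) {c : V → ℕ} (hc : β - α = ∑ x ∈ Δ, (c x : ℝ) • x)
    {a : V} (ha : a ∈ Δ) (hca : 0 < c a) (hαa : ⟪a, α⟫ < 0) :
    ∃ (α' : V) (c' : V → ℕ), IsSimpleStep Φ Δ r f α' a α ∧ α' ∈ posRoots Φ Δ ∧
      ⟪α', α'⟫ = r ∧ β - α' = ∑ x ∈ Δ, (c' x : ℝ) • x ∧ ∑ x ∈ Δ, c' x < ∑ x ∈ Δ, c x := by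
  classical
  have haΦ := hΔ.1 ha
  have haa := hΦ.inner_self_pos_s14 haΦ
  have hαa' : -a ≠ α := fun h => neg_notMem_posRoots hΦ hΔ ha (h ▸ hα)
  obtain ⟨N, hN0, hN, hNr⟩ := hΦ.exists_nat_reflect_coeff hr (hΦ.neg_mem_s14 haΦ) hα.1 hαr hαa'
    (by rw [inner_neg_left]; linarith)
  simp only [inner_neg_left, inner_neg_right, neg_neg] at hN hNr
  have hrefl : α - (2 * ⟪a, α⟫ / ⟪a, a⟫) • a = α + (N : ℝ) • a := by
    rw [← hN, mul_neg, neg_div, neg_smul, sub_eq_add_neg]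
  have hα'r : ⟪α + (N : ℝ) • a, α + (N : ℝ) • a⟫ = r := by
    rw [← hrefl, inner_self_reflect a α haa.ne', hαr]
  have hα' : α + (N : ℝ) • a ∈ posRoots Φ Δ :=
    mem_posRoots_of_sub_eq_sum (hrefl ▸ hΦ.reflect_mem a haΦ α hα.1) hα
      (c := Pi.single a N) (by rw [sum_single_smul ha, add_sub_cancel_left])
  have hN' : 2 * ⟪a, α + (N : ℝ) • a⟫ / ⟪a, a⟫ = N := by
    rw [div_eq_iff haa.ne'] at hN ⊢
    rw [inner_add_right, real_inner_smul_right]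
    linarith
  have hstep := isSimpleStep_sub_nat_smul (f := f) hΦ hΔ hr hf ha hα'r hN' hNr
    (by rwa [add_sub_cancel_right])
  rw [add_sub_cancel_right] at hstep
  obtain ⟨c', hc', hlt⟩ :=
    exists_sum_smul_eq_sub_smul_of_long hΦ hΔ hr hα hαr hβ hβr hc ha hca hN0 hNr
  exact ⟨_, c', hstep, hα', hα'r, by rw [← sub_sub, hc'], hlt⟩

theorem reflTransGen_isSimpleStep (hΦ : IsIrredRootSystem Φ) (hΔ : IsBase Φ Δ)
    (hr : IsGreatest {x : ℝ | ∃ α ∈ Φ, x = ⟪α, α⟫} r) (hf : ∀ a ∈ Δ, f (coroot a) = 1)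
    {α β : V} (hα : α ∈ posRoots Φ Δ) (hαr : ⟪α, α⟫ = r) (hβ : β ∈ posRoots Φ Δ)
    (hβr : ⟪β, β⟫ = r) {c : V → ℕ} (hc : β - α = ∑ x ∈ Δ, (c x : ℝ) • x) :
    ReflTransGen (fun x y => ∃ g, IsSimpleStep Φ Δ r f x g y) β α := by
  obtain ⟨n, hn⟩ : ∃ n, ∑ x ∈ Δ, c x = n := ⟨_, rfl⟩
  induction n using Nat.strong_induction_on generalizing α β c with
  | _ n ih =>
  obtain rfl | hne := eq_or_ne β α
  · exact .refl
  obtain ⟨a, ha, hca, hav⟩ := exists_mem_coeff_pos_inner_pos (sub_ne_zero.mpr hne) hc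
  rcases lt_or_ge 0 ⟪a, β⟫ with hβa | hβa
  · obtain ⟨β', c', hstep, hc', hlt⟩ :=
      exists_isSimpleStep_of_inner_pos hΦ hΔ hr hf hα hαr hβ hβr hne hc ha hca hβa
    exact .head ⟨a, hstep⟩ (ih _ (hn ▸ hlt) hα hαr hstep.2.2.1 hstep.2.2.2.1 hc' rfl)
  · have hαa : ⟪a, α⟫ < 0 := by
      rw [inner_sub_right] at hav
      linarith
    obtain ⟨α', c', hstep, hα', hα'r, hc', hlt⟩ :=
      exists_isSimpleStep_of_inner_neg hΦ hΔ hr hf hα hαr hβ hβr hc ha hca hαa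
    exact .tail (ih _ (hn ▸ hlt) hα' hα'r hβ hβr hc' rfl) ⟨a, hstep⟩

end SimplePath

/-- The level `L = ht^∨(α̃) - ht^∨` of the paper enters through `ht^∨ = f ∘ coroot`, so `L` goes
up by one exactly when `f ∘ coroot` goes down by one. -/
theorem exists_simple_path_general (Φ : Set V) (hΦ : IsIrredRootSystem Φ)
    (Δ : Finset V) (hΔ : IsBase Φ Δ)
    (r : ℝ) (hr : IsGreatest {x : ℝ | ∃ α ∈ Φ, x = ⟪α, α⟫} r)
    (f : V →ₗ[ℝ] ℝ) (hf : ∀ a ∈ Δ, f (coroot a) = 1)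
    (α β : V) (hα : α ∈ posRoots Φ Δ) (hαlg : ⟪α, α⟫ = r)
    (hβ : β ∈ posRoots Φ Δ) (hβlg : ⟪β, β⟫ = r)
    (hle : ∃ c : V → ℕ, β - α = ∑ a ∈ Δ, (c a : ℝ) • a) :
    ∃ (k : ℕ) (b g : ℕ → V), b 0 = β ∧ b k = α ∧
      ∀ i < k, g i ∈ Δ ∧
        b (i + 1) = b i - (2 * ⟪g i, b i⟫ / ⟪g i, g i⟫) • g i ∧
        b (i + 1) ∈ posRoots Φ Δ ∧ ⟪b (i + 1), b (i + 1)⟫ = r ∧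
        f (coroot (b (i + 1))) = f (coroot (b i)) - 1 := by
  obtain ⟨c, hc⟩ := hle
  exact (reflTransGen_isSimpleStep hΦ hΔ hr hf hα hαlg hβ hβlg hc).exists_nat_seq

/-- Let `α ≤ β` be positive long roots (`β − α` a nonnegative integer
combination of simple roots). Then there is a simple path from `β` down to `α`: a
sequence of long roots `β = b₀, b₁, …, b_k = α` and simple roots `g₀, …, g_{k−1}` with
`b_{i+1} = s_{g_i}(b_i)` and level increasing by one at each step — for positive long
roots this means the dual height `ht^∨ = f ∘ coroot` drops by one at each step. -/
theorem exists_simple_path (Φ : Set V) (hΦ : IsIrredRootSystem Φ)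
    (Δ : Finset V) (hΔ : IsBase Φ Δ)
    (r : ℝ) (hr : IsGreatest {x : ℝ | ∃ α ∈ Φ, x = ⟪α, α⟫} r)
    (t : V) (ht : IsHighestRoot Φ Δ t)
    (f : V →ₗ[ℝ] ℝ) (hf : ∀ a ∈ Δ, f (coroot a) = 1)
    (α β : V) (hα : α ∈ posRoots Φ Δ) (hαlg : ⟪α, α⟫ = r)
    (hβ : β ∈ posRoots Φ Δ) (hβlg : ⟪β, β⟫ = r)
    (hle : ∃ c : V → ℕ, β - α = ∑ a ∈ Δ, (c a : ℝ) • a) :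
    ∃ (k : ℕ) (b g : ℕ → V), b 0 = β ∧ b k = α ∧
      ∀ i < k, g i ∈ Δ ∧
        b (i + 1) = b i - (2 * ⟪g i, b i⟫ / ⟪g i, g i⟫) • g i ∧
        b (i + 1) ∈ posRoots Φ Δ ∧ ⟪b (i + 1), b (i + 1)⟫ = r ∧
        f (coroot (b (i + 1))) = f (coroot (b i)) - 1 :=
  exists_simple_path_general Φ hΦ Δ hΔ r hr f hf α β hα hαlg hβ hβlg hle
end

section
/- Let 𝒟 be a triangulated category with a t-structure (𝒟^{≤0}, 𝒟^{≥0}) whose heart 𝒞 carries a torsion theory (𝒯, ℱ). Then the pair (𝒟^{≤0⁺}, 𝒟^{≥0⁺}) defined by 𝒟^{≤0⁺} = {A ∈ 𝒟^{≤1} : H¹(A) ∈ 𝒯} and 𝒟^{≥0⁺} = {A ∈ 𝒟^{≥0} : H⁰(A) ∈ ℱ} is again a t-structure on 𝒟. -/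
/-!
Write `P * Q` for the extension product (objects `X` sitting in a distinguished triangle
`Y ⟶ X ⟶ Z ⟶ Y⟦1⟧` with `Y ∈ P`, `Z ∈ Q`). The tilted aisle and coaisle are
`𝒟^{≤0} * 𝒯[-1]` and `ℱ * 𝒟^{≥1}`. Orthogonality of two extension products reduces to
orthogonality of their four factors, each of which is either a t-structure vanishing or
`Hom(𝒯, ℱ) = 0`. Truncation triangles come from associativity of `*`, i.e. the octahedral
axiom: `𝒟 = 𝒟^{≤1} * 𝒟^{≥2}`, `𝒟^{≤1} = 𝒟^{≤0} * 𝒞[-1]` and `𝒞 = 𝒯 * ℱ`, so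
`𝒟 = (𝒟^{≤0} * 𝒯[-1]) * (ℱ[-1] * 𝒟^{≥2})`.
-/

open CategoryTheory CategoryTheory.Limits CategoryTheory.Pretriangulated
  CategoryTheory.Triangulated

namespace CategoryTheory.ObjectProperty

open ZeroObject

section ZeroMorphisms

variable {C : Type*} [Category C] [HasZeroMorphisms C]

lemma le_leftOrthogonal_iff_le_rightOrthogonal (P Q : ObjectProperty C) :
    P ≤ Q.leftOrthogonal ↔ Q ≤ P.rightOrthogonal :=
  ⟨fun h _ hY _ f hX => h _ hX f hY, fun h _ hX _ f hY => h _ hY f hX⟩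

variable {A : Type*} [AddGroup A] [HasShift C A] (a : A)
  [(shiftFunctor C a).PreservesZeroMorphisms]

instance [HasZeroObject C] (P : ObjectProperty C) [P.ContainsZero]
    [P.IsClosedUnderIsomorphisms] : (P.shift a).ContainsZero :=
  ⟨⟨0, isZero_zero C, P.prop_of_isZero ((shiftFunctor C a).map_isZero (isZero_zero C))⟩⟩

lemma shift_le_leftOrthogonal_shift {P Q : ObjectProperty C} (h : P ≤ Q.leftOrthogonal) :
    P.shift a ≤ (Q.shift a).leftOrthogonal :=
  fun X hX Y f hY => (shiftFunctor C a).map_injective (by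
    rw [Functor.map_zero]
    exact h _ hX _ hY)

end ZeroMorphisms

variable {C : Type*} [Category C] [Preadditive C] [HasZeroObject C] [HasShift C ℤ]
  [∀ n : ℤ, (shiftFunctor C n).Additive] [Pretriangulated C]

lemma le_leftOrthogonal_extensionProduct {P Q₁ Q₂ : ObjectProperty C}
    (h₁ : P ≤ Q₁.leftOrthogonal) (h₂ : P ≤ Q₂.leftOrthogonal) :
    P ≤ (extensionProduct Q₁ Q₂).leftOrthogonal := by
  rw [le_leftOrthogonal_iff_le_rightOrthogonal] at *
  exact extensionProduct_le_of_isTriangulatedClosed₂ h₁ h₂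

lemma extensionProduct_shift_le (P Q : ObjectProperty C) (a : ℤ) :
    extensionProduct (P.shift a) (Q.shift a) ≤ (extensionProduct P Q).shift a := by
  rintro X ⟨Y, Z, f, g, h, mem, hY, hZ⟩
  exact ⟨_, _, _, _, _, Triangle.shift_distinguished _ mem a, hY, hZ⟩

lemma extensionProduct_shift (P Q : ObjectProperty C) [P.IsClosedUnderIsomorphisms]
    [Q.IsClosedUnderIsomorphisms] (a : ℤ) :
    (extensionProduct P Q).shift a = extensionProduct (P.shift a) (Q.shift a) := by
  refine le_antisymm (fun X hX => ?_) (extensionProduct_shift_le P Q a)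
  have shift_shift_neg (R : ObjectProperty C) [R.IsClosedUnderIsomorphisms] :
      (R.shift a).shift (-a) = R := by
    rw [shift_shift _ _ _ 0 (neg_add_cancel a), shift_zero]
  rw [prop_shift_iff, ← shift_shift_neg P, ← shift_shift_neg Q] at hX
  exact (extensionProduct _ _).prop_of_iso ((shiftEquiv C a).unitIso.symm.app X)
    (extensionProduct_shift_le _ _ (-a) _ hX)

lemma extensionProduct_shift_right_iff (P Q : ObjectProperty C) [Q.IsClosedUnderIsomorphisms]
    (a : ℤ) (X : C) :
    extensionProduct P (Q.shift a) X ↔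
      ∃ (Y : C) (_ : P Y) (Z : C) (_ : Q Z) (f : Y ⟶ X) (g : X ⟶ Z⟦-a⟧)
        (h : Z⟦-a⟧ ⟶ Y⟦(1 : ℤ)⟧), Triangle.mk f g h ∈ distTriang C := by
  constructor
  · rintro ⟨Y, Z, f, g, h, mem, hY, hZ⟩
    let e : Z ≅ Z⟦a⟧⟦-a⟧ := (shiftEquiv C a).unitIso.app Z
    refine ⟨Y, hY, Z⟦a⟧, hZ, f, g ≫ e.hom, e.inv ≫ h, isomorphic_distinguished _ mem _
      (Triangle.isoMk _ _ (Iso.refl _) (Iso.refl _) e.symm ?_ ?_ ?_)⟩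
    all_goals simp [Triangle.mk]
  · rintro ⟨Y, hY, Z, hZ, f, g, h, mem⟩
    exact ⟨Y, Z⟦-a⟧, f, g, h, mem, hY, Q.prop_of_iso ((shiftEquiv C a).counitIso.symm.app Z) hZ⟩

end CategoryTheory.ObjectProperty

namespace CategoryTheory.Triangulated.TStructure

open ObjectProperty ZeroObject

variable {C : Type*} [Category C] [Preadditive C] [HasZeroObject C] [HasShift C ℤ]
  [∀ n : ℤ, (shiftFunctor C n).Additive] [Pretriangulated C]

def ofLEZeroGEZero (P Q : ObjectProperty C) [P.IsClosedUnderIsomorphisms]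
    [Q.IsClosedUnderIsomorphisms] (hPQ : P ≤ (Q.shift (1 : ℤ)).leftOrthogonal)
    (hP : P ≤ P.shift (1 : ℤ)) (hQ : Q.shift (1 : ℤ) ≤ Q)
    (exists_triangle : ∀ X, extensionProduct P (Q.shift (1 : ℤ)) X) : TStructure C where
  le n := P.shift n
  ge n := Q.shift n
  le_shift n a n' h X hX := by rwa [← P.shift_shift a n' n h] at hX
  ge_shift n a n' h X hX := by rwa [← Q.shift_shift a n' n h] at hX
  zero' X Y f hX hY := hPQ X (by rwa [shift_zero] at hX) f hY
  le_zero_le := by rw [shift_zero]; exact hP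
  ge_one_le := by rw [shift_zero]; exact hQ
  exists_triangle_zero_one A := by
    obtain ⟨X, Y, f, g, h, mem, hX, hY⟩ := exists_triangle A
    exact ⟨X, Y, by rwa [shift_zero], hY, f, g, h, mem⟩

variable (t : TStructure C)

instance (n : ℤ) : (t.le n).IsTriangulatedClosed₂ :=
  .mk' fun T hT h₁ h₃ => (t.isLE₂ T hT n ⟨h₁⟩ ⟨h₃⟩).le

instance (n : ℤ) : (t.ge n).IsTriangulatedClosed₂ :=
  .mk' fun T hT h₁ h₃ => (t.isGE₂ T hT n ⟨h₁⟩ ⟨h₃⟩).ge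

lemma le_leftOrthogonal_ge (n₀ n₁ : ℤ) (h : n₀ < n₁) : t.le n₀ ≤ (t.ge n₁).leftOrthogonal :=
  fun _ hX _ f hY => t.zero_of_isLE_of_isGE f n₀ n₁ h ⟨hX⟩ ⟨hY⟩

lemma le_le_extensionProduct_le_inf_ge (n₀ n₁ : ℤ) (h : n₀ + 1 = n₁) :
    t.le n₁ ≤ extensionProduct (t.le n₀) (t.le n₁ ⊓ t.ge n₁) := by
  intro X hX
  obtain ⟨Y, Z, hY, hZ, f, g, δ, mem⟩ := t.exists_triangle X n₀ n₁ h
  have hY₁ : t.le n₁ (Y⟦(1 : ℤ)⟧) :=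
    t.le_monotone (by omega) _ (t.le_shift n₀ 1 (n₀ - 1) (by omega) Y hY)
  exact ⟨Y, Z, f, g, δ, mem, hY, (t.isLE₂ _ (rot_of_distTriang _ mem) n₁ ⟨hX⟩ ⟨hY₁⟩).le, hZ⟩

lemma containsZero_of_heart_le_extensionProduct {𝒯 ℱ : ObjectProperty C} (h𝒯 : 𝒯 ≤ t.le 0)
    (hℱ : ℱ ≤ t.ge 0) (h : t.heart ≤ extensionProduct 𝒯 ℱ) :
    𝒯.ContainsZero ∧ ℱ.ContainsZero := by
  obtain ⟨τ, φ, a, b, c, mem, hτ, hφ⟩ := h 0 ⟨t.le_of_isLE 0 0, t.ge_of_isGE 0 0⟩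
  have : IsIso c := (Triangle.isZero₂_iff_isIso₃ _ mem).1 (isZero_zero C)
  have : t.IsLE τ 0 := ⟨h𝒯 _ hτ⟩
  have : t.IsLE (τ⟦(1 : ℤ)⟧) (-1) := t.isLE_shift τ 0 1 (-1)
  have : t.IsLE φ (-1) := t.isLE_of_iso (asIso c).symm (-1)
  have : t.IsGE φ 0 := ⟨hℱ _ hφ⟩
  have hφ₀ : IsZero φ := t.isZero φ (-1) 0
  exact ⟨⟨τ, Triangle.isZero₁_of_isZero₂₃ _ mem (isZero_zero C) hφ₀, hτ⟩, ⟨φ, hφ₀, hφ⟩⟩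

section Tilt

variable (𝒯 ℱ : ObjectProperty C)

/- The paper's `{A ∈ 𝒟^{≤1} : H¹(A) ∈ 𝒯}` and `{A ∈ 𝒟^{≥0} : H⁰(A) ∈ ℱ}`, written as the
extension products `𝒟^{≤0} * 𝒯[-1]` and `ℱ * 𝒟^{≥1}`. -/
abbrev tiltLE : ObjectProperty C := extensionProduct (t.le 0) (𝒯.shift (1 : ℤ))

abbrev tiltGE : ObjectProperty C := extensionProduct ℱ (t.ge 1)

variable {𝒯 ℱ}

lemma shift_one_le_le_one (h𝒯 : 𝒯 ≤ t.le 0) : 𝒯.shift (1 : ℤ) ≤ t.le 1 := by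
  rw [← t.shift_le 1 0 1 (by norm_num)]
  exact fun X hX => h𝒯 _ hX

lemma shift_one_le_ge_one (hℱ : ℱ ≤ t.ge 0) : ℱ.shift (1 : ℤ) ≤ t.ge 1 := by
  rw [← t.shift_ge 1 0 1 (by norm_num)]
  exact fun X hX => hℱ _ hX

lemma tiltGE_shift_one [ℱ.IsClosedUnderIsomorphisms] :
    (t.tiltGE ℱ).shift (1 : ℤ) = extensionProduct (ℱ.shift (1 : ℤ)) (t.ge 2) := by
  rw [tiltGE, extensionProduct_shift, t.shift_ge 1 1 2 (by norm_num)]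

lemma tiltLE_le_one (h𝒯 : 𝒯 ≤ t.le 0) : t.tiltLE 𝒯 ≤ t.le 1 :=
  extensionProduct_le_of_isTriangulatedClosed₂ (t.le_monotone (by norm_num))
    (t.shift_one_le_le_one h𝒯)

lemma tiltGE_le_ge_zero (hℱ : ℱ ≤ t.ge 0) : t.tiltGE ℱ ≤ t.ge 0 :=
  extensionProduct_le_of_isTriangulatedClosed₂ hℱ (t.ge_antitone (by norm_num))

lemma tiltLE_le_shift_one [𝒯.ContainsZero] [𝒯.IsClosedUnderIsomorphisms]
    (h𝒯 : 𝒯 ≤ t.le 0) : t.tiltLE 𝒯 ≤ (t.tiltLE 𝒯).shift (1 : ℤ) := by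
  refine (t.tiltLE_le_one h𝒯).trans ?_
  rw [← t.shift_le 1 0 1 (by norm_num)]
  exact fun X hX => le_extensionProduct_left _ _ hX

lemma shift_one_tiltGE_le [ℱ.ContainsZero] (hℱ : ℱ ≤ t.ge 0) :
    (t.tiltGE ℱ).shift (1 : ℤ) ≤ t.tiltGE ℱ := by
  refine le_trans ?_ (le_extensionProduct_right _)
  rw [← t.shift_ge 1 0 1 (by norm_num)]
  exact fun X hX => t.tiltGE_le_ge_zero hℱ _ hX

lemma tiltLE_le_leftOrthogonal [ℱ.IsClosedUnderIsomorphisms] (h𝒯 : 𝒯 ≤ t.le 0)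
    (hℱ : ℱ ≤ t.ge 0) (h𝒯ℱ : 𝒯 ≤ ℱ.leftOrthogonal) :
    t.tiltLE 𝒯 ≤ ((t.tiltGE ℱ).shift (1 : ℤ)).leftOrthogonal := by
  rw [tiltGE_shift_one]
  refine extensionProduct_le_of_isTriangulatedClosed₂ ?_ ?_ <;>
    refine le_leftOrthogonal_extensionProduct ?_ ?_
  · exact fun X hX Y f hY => t.le_leftOrthogonal_ge 0 1 (by norm_num) X hX f
      (t.shift_one_le_ge_one hℱ Y hY)
  · exact t.le_leftOrthogonal_ge 0 2 (by norm_num)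
  · exact shift_le_leftOrthogonal_shift 1 h𝒯ℱ
  · exact (t.shift_one_le_le_one h𝒯).trans (t.le_leftOrthogonal_ge 1 2 (by norm_num))

lemma extensionProduct_tiltLE_tiltGE_shift_one [IsTriangulated C] [𝒯.IsClosedUnderIsomorphisms]
    [ℱ.IsClosedUnderIsomorphisms] (h : t.heart ≤ extensionProduct 𝒯 ℱ) (A : C) :
    extensionProduct (t.tiltLE 𝒯) ((t.tiltGE ℱ).shift (1 : ℤ)) A := by
  have hheart : t.le 1 ⊓ t.ge 1 ≤ extensionProduct (𝒯.shift (1 : ℤ)) (ℱ.shift (1 : ℤ)) := by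
    rw [← extensionProduct_shift, ← t.shift_le 1 0 1 (by norm_num),
      ← t.shift_ge 1 0 1 (by norm_num)]
    exact fun X hX => h _ hX
  rw [tiltLE, tiltGE_shift_one, ← extensionProduct_assoc, extensionProduct_assoc (t.le 0)]
  obtain ⟨X, Y, hX, hY, f, g, δ, mem⟩ := t.exists_triangle A 1 2 (by norm_num)
  exact ⟨X, Y, f, g, δ, mem, monotone_extensionProduct_right _ hheart _
    (t.le_le_extensionProduct_le_inf_ge 0 1 (by norm_num) X hX), hY⟩

def tilt [IsTriangulated C] [𝒯.IsClosedUnderIsomorphisms] [ℱ.IsClosedUnderIsomorphisms]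
    (h𝒯 : 𝒯 ≤ t.le 0) (hℱ : ℱ ≤ t.ge 0) (h𝒯ℱ : 𝒯 ≤ ℱ.leftOrthogonal)
    (hheart : t.heart ≤ extensionProduct 𝒯 ℱ) : TStructure C :=
  have := (t.containsZero_of_heart_le_extensionProduct h𝒯 hℱ hheart).1
  have := (t.containsZero_of_heart_le_extensionProduct h𝒯 hℱ hheart).2
  ofLEZeroGEZero (t.tiltLE 𝒯) (t.tiltGE ℱ) (t.tiltLE_le_leftOrthogonal h𝒯 hℱ h𝒯ℱ)
    (t.tiltLE_le_shift_one h𝒯) (t.shift_one_tiltGE_le hℱ)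
    (t.extensionProduct_tiltLE_tiltGE_shift_one hheart)

variable [IsTriangulated C] [𝒯.IsClosedUnderIsomorphisms] [ℱ.IsClosedUnderIsomorphisms]
  (h𝒯 : 𝒯 ≤ t.le 0) (hℱ : ℱ ≤ t.ge 0) (h𝒯ℱ : 𝒯 ≤ ℱ.leftOrthogonal)
  (hheart : t.heart ≤ extensionProduct 𝒯 ℱ)

lemma tilt_le_zero_iff (A : C) :
    (t.tilt h𝒯 hℱ h𝒯ℱ hheart).le 0 A ↔
      ∃ (A' : C) (_ : t.le 0 A') (τ : C) (_ : 𝒯 τ) (f : A' ⟶ A) (g : A ⟶ τ⟦(-1 : ℤ)⟧)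
        (h : τ⟦(-1 : ℤ)⟧ ⟶ A'⟦(1 : ℤ)⟧), Triangle.mk f g h ∈ distTriang C := by
  change (t.tiltLE 𝒯).shift (0 : ℤ) A ↔ _
  rw [shift_zero]
  exact extensionProduct_shift_right_iff _ _ 1 A

lemma tilt_ge_zero_iff (A : C) :
    (t.tilt h𝒯 hℱ h𝒯ℱ hheart).ge 0 A ↔
      ∃ (φ : C) (_ : ℱ φ) (B : C) (_ : t.ge 1 B) (f : φ ⟶ A) (g : A ⟶ B)
        (h : B ⟶ φ⟦(1 : ℤ)⟧), Triangle.mk f g h ∈ distTriang C := by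
  change (t.tiltGE ℱ).shift (0 : ℤ) A ↔ _
  rw [shift_zero]
  exact ⟨fun ⟨φ, B, f, g, h, mem, hφ, hB⟩ => ⟨φ, hφ, B, hB, f, g, h, mem⟩,
    fun ⟨φ, hφ, B, hB, f, g, h, mem⟩ => ⟨φ, B, f, g, h, mem, hφ, hB⟩⟩

end Tilt

end CategoryTheory.Triangulated.TStructure

/-- **Happel–Reiten–Smalø tilt.** Let `𝒟` be a triangulated category
with a t-structure `t` whose heart `𝒞 = 𝒟^{≤0} ∩ 𝒟^{≥0}` carries a torsion theory
`(𝒯, ℱ)` (both classes lie in the heart and are closed under isomorphisms, morphisms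
from `𝒯` to `ℱ` vanish, and every object of the heart is an extension of an object of
`ℱ` by an object of `𝒯`).  Then the pair
`𝒟^{≤0⁺} = {A ∈ 𝒟^{≤1} : H¹(A) ∈ 𝒯}` and `𝒟^{≥0⁺} = {A ∈ 𝒟^{≥0} : H⁰(A) ∈ ℱ}`
is again a t-structure on `𝒟`.  (For `A ∈ 𝒟^{≤1}`, the condition `H¹(A) ∈ 𝒯` is
expressed by the existence of a distinguished triangle `A' → A → τ⟦−1⟧ → A'⟦1⟧` with
`A' ∈ 𝒟^{≤0}` and `τ ∈ 𝒯`; for `A ∈ 𝒟^{≥0}`, the condition `H⁰(A) ∈ ℱ` is expressed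
by the existence of a distinguished triangle `φ → A → B → φ⟦1⟧` with `φ ∈ ℱ` and
`B ∈ 𝒟^{≥1}`.) -/
theorem tStructure_tilt_of_torsionTheory
    {𝒟 : Type*} [Category 𝒟] [Preadditive 𝒟] [HasZeroObject 𝒟] [HasShift 𝒟 ℤ]
    [∀ n : ℤ, (shiftFunctor 𝒟 n).Additive] [Pretriangulated 𝒟] [IsTriangulated 𝒟]
    (t : TStructure 𝒟) (T F : Set 𝒟)
    (hT_heart : ∀ X ∈ T, t.le 0 X ∧ t.ge 0 X)
    (hF_heart : ∀ X ∈ F, t.le 0 X ∧ t.ge 0 X)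
    (hT_iso : ∀ ⦃X Y : 𝒟⦄, (X ≅ Y) → X ∈ T → Y ∈ T)
    (hF_iso : ∀ ⦃X Y : 𝒟⦄, (X ≅ Y) → X ∈ F → Y ∈ F)
    (h_hom : ∀ τ ∈ T, ∀ φ ∈ F, ∀ u : τ ⟶ φ, u = 0)
    (h_ses : ∀ A : 𝒟, t.le 0 A → t.ge 0 A →
      ∃ (τ : 𝒟) (_ : τ ∈ T) (φ : 𝒟) (_ : φ ∈ F) (a : τ ⟶ A) (b : A ⟶ φ)
        (c : φ ⟶ τ⟦(1 : ℤ)⟧), Triangle.mk a b c ∈ distTriang 𝒟) :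
    ∃ t' : TStructure 𝒟,
      (∀ A : 𝒟, t'.le 0 A ↔
        ∃ (A' : 𝒟) (_ : t.le 0 A') (τ : 𝒟) (_ : τ ∈ T) (f : A' ⟶ A)
          (g : A ⟶ τ⟦(-1 : ℤ)⟧) (h : τ⟦(-1 : ℤ)⟧ ⟶ A'⟦(1 : ℤ)⟧),
          Triangle.mk f g h ∈ distTriang 𝒟) ∧
      (∀ A : 𝒟, t'.ge 0 A ↔
        ∃ (φ : 𝒟) (_ : φ ∈ F) (B : 𝒟) (_ : t.ge 1 B) (f : φ ⟶ A) (g : A ⟶ B)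
          (h : B ⟶ φ⟦(1 : ℤ)⟧), Triangle.mk f g h ∈ distTriang 𝒟) := by
  let 𝒯 : ObjectProperty 𝒟 := (· ∈ T)
  let ℱ : ObjectProperty 𝒟 := (· ∈ F)
  have : 𝒯.IsClosedUnderIsomorphisms := ⟨fun e => hT_iso e⟩
  have : ℱ.IsClosedUnderIsomorphisms := ⟨fun e => hF_iso e⟩
  have h𝒯 : 𝒯 ≤ t.le 0 := fun X hX => (hT_heart X hX).1
  have hℱ : ℱ ≤ t.ge 0 := fun X hX => (hF_heart X hX).2
  have h𝒯ℱ : 𝒯 ≤ ℱ.leftOrthogonal := fun τ hτ φ u hφ => h_hom τ hτ φ hφ u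
  have hheart : t.heart ≤ 𝒯.extensionProduct ℱ := by
    rintro A ⟨hA₀, hA₁⟩
    obtain ⟨τ, hτ, φ, hφ, a, b, c, mem⟩ := h_ses A hA₀ hA₁
    exact ⟨τ, φ, a, b, c, mem, hτ, hφ⟩
  exact ⟨t.tilt h𝒯 hℱ h𝒯ℱ hheart, t.tilt_le_zero_iff h𝒯 hℱ h𝒯ℱ hheart,
    t.tilt_ge_zero_iff h𝒯 hℱ h𝒯ℱ hheart⟩
end
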